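/- arXiv:math/0305179 — 4 statements merged into one kernel-verified Lean document; each statement's English description precedes it below -/
import Mathlib

section
/- For every real Y > 0 and every complex number s with Re s > −1, one has ∑_{n=1}^∞ e^{−n/Y} · n^{−s} = (1/(2π)) ∫_{−∞}^{∞} Y^{2+iv} · ζ(s + 2 + iv) · Γ(2 + iv) dv, where the series converges absolutely and the integral converges absolutely. -/
open Complex MeasureTheory Set

namespace SmoothedZetaAux

lemma contGamma : Continuous fun v : ℝ => Complex.Gamma (2 + v * I) := by
  rw [continuous_iff_continuousAt]
  intro v
  refine (Complex.differentiableAt_Gamma _ ?_).continuousAt.comp (by fun_prop)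
  intro m h
  have := congrArg Complex.re h
  simp at this
  have : (0:ℝ) ≤ m := Nat.cast_nonneg m
  linarith

lemma normGamma4 (v : ℝ) : ‖Complex.Gamma (4 + v * I)‖ ≤ Real.Gamma 4 := by
  rw [Complex.Gamma_eq_integral (by simp : 0 < (4 + v*I).re), Complex.GammaIntegral,
    Real.Gamma_eq_integral (by norm_num : (0:ℝ) < 4)]
  refine norm_integral_le_of_norm_le (Real.GammaIntegral_convergent (by norm_num)) ?_
  filter_upwards [ae_restrict_mem measurableSet_Ioi] with t (ht : 0 < t)
  rw [norm_mul]
  have h1 : ‖((Real.exp (-t):ℝ) : ℂ)‖ = Real.exp (-t) := by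
    rw [Complex.norm_real]; exact abs_of_pos (Real.exp_pos _)
  have h2 : ‖(t:ℂ) ^ (4 + v*I - 1)‖ = t ^ ((4:ℝ) - 1) := by
    rw [Complex.norm_cpow_eq_rpow_re_of_pos ht]
    norm_num
  rw [h1, h2]

lemma gammaBound (v : ℝ) :
    ‖Complex.Gamma (2 + v * I)‖ ≤ Real.Gamma 4 / (1 + v ^ 2) := by
  have h2 : (2 + v*I) ≠ 0 := by
    intro h; have := congrArg Complex.re h; simp at this
  have h3 : (3 + v*I) ≠ 0 := by
    intro h; have := congrArg Complex.re h; simp at this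
  have key : Complex.Gamma (4 + v*I) = (3+v*I) * ((2+v*I) * Complex.Gamma (2+v*I)) := by
    have e1 : (4:ℂ) + v*I = (3+v*I) + 1 := by ring
    have e2 : (3:ℂ) + v*I = (2+v*I) + 1 := by ring
    rw [e1, Complex.Gamma_add_one _ h3, e2, Complex.Gamma_add_one _ h2]
  have habs : ‖(3+v*I : ℂ)‖ * ‖(2+v*I : ℂ)‖ ≥ 1 + v^2 := by
    have a3 : ‖(3+v*I : ℂ)‖ = Real.sqrt (9 + v^2) := by
      have : (3 : ℂ) + v*I = Complex.mk 3 v := by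
        apply Complex.ext <;> simp
      rw [this, Complex.norm_def, Complex.normSq_mk]
      ring_nf
    have a2 : ‖(2+v*I : ℂ)‖ = Real.sqrt (4 + v^2) := by
      have : (2 : ℂ) + v*I = Complex.mk 2 v := by
        apply Complex.ext <;> simp
      rw [this, Complex.norm_def, Complex.normSq_mk]
      ring_nf
    rw [a3, a2, ← Real.sqrt_mul (by positivity)]
    have : (1 + v^2) = Real.sqrt ((1+v^2)^2) := by
      rw [Real.sqrt_sq (by positivity)]
    rw [this]
    apply Real.sqrt_le_sqrt
    nlinarith [sq_nonneg v, sq_nonneg (v^2)]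
  have hnorm : ‖Complex.Gamma (4 + v*I)‖
      = ‖(3+v*I:ℂ)‖ * ‖(2+v*I:ℂ)‖ * ‖Complex.Gamma (2+v*I)‖ := by
    rw [key, norm_mul, norm_mul, mul_assoc]
  rw [ge_iff_le] at habs
  have hpos : (0:ℝ) < 1 + v^2 := by positivity
  rw [le_div_iff₀ hpos]
  calc ‖Complex.Gamma (2+v*I)‖ * (1 + v^2)
      ≤ ‖Complex.Gamma (2+v*I)‖ * (‖(3+v*I:ℂ)‖ * ‖(2+v*I:ℂ)‖) := by
        gcongr
    _ = ‖Complex.Gamma (4+v*I)‖ := by rw [hnorm]; ring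
    _ ≤ Real.Gamma 4 := normGamma4 v

lemma intGamma : Integrable fun v : ℝ => Complex.Gamma (2 + v * I) := by
  refine Integrable.mono' ((integrable_inv_one_add_sq).const_mul (Real.Gamma 4))
    contGamma.aestronglyMeasurable ?_
  filter_upwards with v
  simpa [div_eq_mul_inv] using gammaBound v

lemma mellin_inv_exp {x : ℝ} (hx : 0 < x) :
    (1 / (2 * Real.pi)) • ∫ y : ℝ, (x:ℂ) ^ (-((2:ℝ) + y * I)) • Complex.Gamma ((2:ℝ) + y * I)
      = (Real.exp (-x) : ℂ) := by
  have hconv : MellinConvergent (fun t => (Real.exp (-t) : ℂ)) (2 : ℂ) := by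
    have := Complex.GammaIntegral_convergent (s := 2) (by norm_num)
    refine this.congr_fun ?_ measurableSet_Ioi
    intro t ht
    simp [mellin, smul_eq_mul, mul_comm, Complex.ofReal_exp]
  have hmel : mellin (fun t => (Real.exp (-t) : ℂ)) = Complex.GammaIntegral := by
    rw [Complex.GammaIntegral_eq_mellin]
  have hvert : VerticalIntegrable (mellin fun t => (Real.exp (-t) : ℂ)) 2 := by
    rw [hmel]
    unfold VerticalIntegrable
    refine intGamma.congr ?_
    filter_upwards with y
    rw [show ((2:ℂ) + y*I) = (((2:ℝ):ℂ) + y*I) by norm_num,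
      Complex.Gamma_eq_integral (by simp : 0 < (((2:ℝ):ℂ) + y*I).re)]
  have hcont : ContinuousAt (fun t => (Real.exp (-t) : ℂ)) x := by fun_prop
  have := mellinInv_mellin_eq 2 (fun t => (Real.exp (-t) : ℂ)) hx hconv hvert hcont
  rw [mellinInv, hmel] at this
  rw [← this]
  congr 1
  refine integral_congr_ae (Filter.Eventually.of_forall fun y => ?_)
  dsimp only
  rw [Complex.Gamma_eq_integral (s := ((2:ℝ):ℂ) + y*I) (by simp)]

lemma cpow_div_aux (Y : ℝ) (hY : 0 < Y) (n : ℕ) (w : ℂ) :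
    ((((n:ℝ)+1)/Y : ℝ) : ℂ) ^ (-w) = (Y:ℂ) ^ w * ((n:ℂ)+1) ^ (-w) := by
  have ha : (0:ℝ) ≤ (n:ℝ)+1 := by positivity
  have hb : (0:ℝ) ≤ Y⁻¹ := by positivity
  rw [div_eq_mul_inv, Complex.ofReal_mul]
  rw [Complex.mul_cpow_ofReal_nonneg ha hb, Complex.ofReal_inv,
    Complex.inv_cpow _ _ (by
      rw [Complex.arg_ofReal_of_nonneg hY.le]
      exact Real.pi_ne_zero.symm),
    Complex.cpow_neg (Y:ℂ) w, inv_inv]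
  have : (((n:ℝ)+1 : ℝ) : ℂ) = (n:ℂ)+1 := by push_cast; ring
  rw [this, mul_comm]

lemma term_eq (Y : ℝ) (hY : 0 < Y) (s : ℂ) (n : ℕ) :
    (Real.exp (-((n:ℝ)+1)/Y) : ℂ) * ((n:ℂ)+1)^(-s)
    = (1/(2*Real.pi)) • ∫ v : ℝ,
        (Y:ℂ)^(2+v*I) * ((n:ℂ)+1)^(-(s+2+v*I)) * Complex.Gamma (2+v*I) := by
  have hxpos : 0 < ((n:ℝ)+1)/Y := by positivity
  have hinv := mellin_inv_exp hxpos
  have hn0 : ((n:ℂ)+1) ≠ 0 := by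
    exact Nat.cast_add_one_ne_zero n
  have hptw : ∀ v : ℝ, ((n:ℂ)+1)^(-s) *
      (((((n:ℝ)+1)/Y : ℝ):ℂ)^(-(((2:ℝ):ℂ)+v*I)) • Complex.Gamma (((2:ℝ):ℂ)+v*I))
      = (Y:ℂ)^(2+v*I) * ((n:ℂ)+1)^(-(s+2+v*I)) * Complex.Gamma (2+v*I) := by
    intro v
    have h2 : (((2:ℝ):ℂ)) = (2:ℂ) := by norm_num
    rw [smul_eq_mul, h2, cpow_div_aux Y hY n (2+v*I)]
    rw [show (-(s+2+v*I)) = -s + -(2+v*I) by ring, Complex.cpow_add _ _ hn0]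
    ring
  calc (Real.exp (-((n:ℝ)+1)/Y) : ℂ) * ((n:ℂ)+1)^(-s)
      = ((n:ℂ)+1)^(-s) * (Real.exp (-(((n:ℝ)+1)/Y)) : ℂ) := by rw [neg_div]; ring
    _ = ((n:ℂ)+1)^(-s) * ((1 / (2 * Real.pi)) • ∫ y : ℝ,
          (((((n:ℝ)+1)/Y:ℝ)):ℂ) ^ (-((2:ℝ) + y * I)) • Complex.Gamma ((2:ℝ) + y * I)) := by
        rw [hinv]
    _ = (1 / (2 * Real.pi)) • ∫ y : ℝ, ((n:ℂ)+1)^(-s) *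
          ((((((n:ℝ)+1)/Y:ℝ)):ℂ) ^ (-((2:ℝ) + y * I)) • Complex.Gamma ((2:ℝ) + y * I)) := by
        rw [mul_smul_comm, ← integral_const_mul]
    _ = (1/(2*Real.pi)) • ∫ v : ℝ,
        (Y:ℂ)^(2+v*I) * ((n:ℂ)+1)^(-(s+2+v*I)) * Complex.Gamma (2+v*I) := by
        congr 1
        exact integral_congr_ae (Filter.Eventually.of_forall fun v => hptw v)

lemma hC_summable (s : ℂ) (hs : -1 < s.re) :
    Summable fun n : ℕ => ((n:ℝ)+1) ^ (-(s.re+2)) := by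
  have h := Real.summable_nat_rpow.mpr (by linarith : -(s.re+2) < -1)
  have := (summable_nat_add_iff 1).mpr h
  refine this.congr fun n => ?_
  push_cast
  ring_nf

lemma norm_cpow_nat (n : ℕ) (w : ℂ) :
    ‖((n:ℂ)+1) ^ w‖ = ((n:ℝ)+1) ^ w.re := by
  have h : ((n:ℂ)+1) = (((n:ℝ)+1 : ℝ) : ℂ) := by push_cast; ring
  rw [h, Complex.norm_cpow_eq_rpow_re_of_pos (by positivity)]

lemma zeta_bound (s : ℂ) (hs : -1 < s.re) (v : ℝ) :
    ‖riemannZeta (s + 2 + v * I)‖ ≤ ∑' n : ℕ, ((n:ℝ)+1) ^ (-(s.re+2)) := by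
  have hre : 1 < (s + 2 + v * I).re := by simp; linarith
  rw [zeta_eq_tsum_one_div_nat_add_one_cpow hre]
  have hnorm : ∀ n : ℕ, ‖1 / ((n:ℂ)+1) ^ (s + 2 + v*I)‖ = ((n:ℝ)+1) ^ (-(s.re+2)) := by
    intro n
    rw [norm_div, norm_one, norm_cpow_nat, one_div, ← Real.rpow_neg (by positivity)]
    congr 1
    simp
  calc ‖∑' n : ℕ, 1 / ((n:ℂ)+1) ^ (s + 2 + v*I)‖
      ≤ ∑' n : ℕ, ‖1 / ((n:ℂ)+1) ^ (s + 2 + v*I)‖ := by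
        refine norm_tsum_le_tsum_norm ?_
        refine (hC_summable s hs).congr fun n => (hnorm n).symm
    _ = ∑' n : ℕ, ((n:ℝ)+1) ^ (-(s.re+2)) := tsum_congr hnorm

lemma part1 (Y : ℝ) (hY : 0 < Y) (s : ℂ) (hs : -1 < s.re) :
    Summable (fun n : ℕ =>
        ‖(Real.exp (-((n : ℝ) + 1) / Y) : ℂ) * ((n : ℂ) + 1) ^ (-s)‖) := by
  set r : ℝ := Real.exp (-1/Y) with hr
  have hr1 : r < 1 := by
    rw [hr, Real.exp_lt_one_iff, neg_div]
    exact neg_lt_zero.mpr (by positivity)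
  have hr0 : 0 < r := Real.exp_pos _
  have hbig : Summable fun n : ℕ => ((n:ℝ)+1) * r ^ (n+1) := by
    have h := summable_pow_mul_geometric_of_norm_lt_one (R := ℝ) 1
      (by rw [Real.norm_eq_abs, abs_of_pos hr0]; exact hr1)
    have h2 := (summable_nat_add_iff 1).mpr h
    refine h2.congr fun n => ?_
    push_cast
    ring
  refine Summable.of_nonneg_of_le (fun n => norm_nonneg _) (fun n => ?_) hbig
  rw [norm_mul, norm_cpow_nat]
  have h1 : ‖(Real.exp (-((n:ℝ)+1)/Y) : ℂ)‖ = r ^ (n+1) := by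
    rw [Complex.norm_real, Real.norm_eq_abs, abs_of_pos (Real.exp_pos _), hr,
      ← Real.exp_nat_mul]
    congr 1
    push_cast
    field_simp
  rw [h1]
  have h2 : ((n:ℝ)+1) ^ (-s).re ≤ (n:ℝ)+1 := by
    have : ((n:ℝ)+1) ^ (-s).re ≤ ((n:ℝ)+1) ^ (1:ℝ) := by
      apply Real.rpow_le_rpow_of_exponent_le (by linarith [Nat.cast_nonneg (α := ℝ) n])
      simp only [Complex.neg_re]
      linarith
    rwa [Real.rpow_one] at this
  calc r ^ (n+1) * ((n:ℝ)+1) ^ (-s).re ≤ r ^ (n+1) * ((n:ℝ)+1) := by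
        apply mul_le_mul_of_nonneg_left h2 (by positivity)
    _ = ((n:ℝ)+1) * r ^ (n+1) := by ring

lemma norm_Y_cpow (Y : ℝ) (hY : 0 < Y) (v : ℝ) :
    ‖(Y:ℂ) ^ ((2:ℂ) + v * I)‖ = Y ^ (2:ℝ) := by
  rw [Complex.norm_cpow_eq_rpow_re_of_pos hY]
  norm_num

lemma contZeta (s : ℂ) (hs : -1 < s.re) :
    Continuous fun v : ℝ => riemannZeta (s + 2 + v * I) := by
  rw [continuous_iff_continuousAt]
  intro v
  refine (differentiableAt_riemannZeta ?_).continuousAt.comp (by fun_prop)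
  intro h
  have := congrArg Complex.re h
  simp at this
  linarith

lemma contIntegrand (Y : ℝ) (hY : 0 < Y) (s : ℂ) (hs : -1 < s.re) :
    Continuous fun v : ℝ => (Y : ℂ) ^ (2 + v * I) * riemannZeta (s + 2 + v * I) *
        Complex.Gamma (2 + v * I) := by
  refine (Continuous.mul ?_ (contZeta s hs)).mul contGamma
  exact Continuous.const_cpow (by fun_prop) (Or.inl (by
    exact_mod_cast ne_of_gt hY))

lemma part2 (Y : ℝ) (hY : 0 < Y) (s : ℂ) (hs : -1 < s.re) :
    MeasureTheory.Integrable (fun v : ℝ =>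
        (Y : ℂ) ^ (2 + v * I) * riemannZeta (s + 2 + v * I) *
          Complex.Gamma (2 + v * I)) := by
  set C : ℝ := ∑' n : ℕ, ((n:ℝ)+1) ^ (-(s.re+2)) with hCdef
  have hC0 : 0 ≤ C := tsum_nonneg fun n => by positivity
  refine Integrable.mono' ((integrable_inv_one_add_sq).const_mul (Y ^ (2:ℝ) * C * Real.Gamma 4))
    (contIntegrand Y hY s hs).aestronglyMeasurable ?_
  filter_upwards with v
  rw [norm_mul, norm_mul, norm_Y_cpow Y hY]
  calc Y ^ (2:ℝ) * ‖riemannZeta (s + 2 + v*I)‖ * ‖Complex.Gamma (2 + v*I)‖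
      ≤ Y ^ (2:ℝ) * C * (Real.Gamma 4 / (1 + v^2)) := by
        apply mul_le_mul
        · apply mul_le_mul_of_nonneg_left (zeta_bound s hs v) (by positivity)
        · exact gammaBound v
        · exact norm_nonneg _
        · positivity
    _ = Y ^ (2:ℝ) * C * Real.Gamma 4 * (1 + v^2)⁻¹ := by ring

lemma contFn (Y : ℝ) (hY : 0 < Y) (s : ℂ) (n : ℕ) :
    Continuous fun v : ℝ =>
      (Y:ℂ)^(2+v*I) * ((n:ℂ)+1)^(-(s+2+v*I)) * Complex.Gamma (2+v*I) := by
  refine (Continuous.mul ?_ ?_).mul contGamma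
  · exact Continuous.const_cpow (by fun_prop) (Or.inl (by exact_mod_cast ne_of_gt hY))
  · exact Continuous.const_cpow (by fun_prop) (Or.inl (Nat.cast_add_one_ne_zero n))

lemma normFn (Y : ℝ) (hY : 0 < Y) (s : ℂ) (n : ℕ) (v : ℝ) :
    ‖(Y:ℂ)^(2+v*I) * ((n:ℂ)+1)^(-(s+2+v*I)) * Complex.Gamma (2+v*I)‖
      = Y ^ (2:ℝ) * ((n:ℝ)+1) ^ (-(s.re+2)) * ‖Complex.Gamma (2+v*I)‖ := by
  rw [norm_mul, norm_mul, norm_Y_cpow Y hY, norm_cpow_nat]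
  congr 2
  simp

lemma intFn (Y : ℝ) (hY : 0 < Y) (s : ℂ) (n : ℕ) :
    Integrable fun v : ℝ =>
      (Y:ℂ)^(2+v*I) * ((n:ℂ)+1)^(-(s+2+v*I)) * Complex.Gamma (2+v*I) := by
  refine Integrable.mono'
    ((integrable_inv_one_add_sq).const_mul (Y ^ (2:ℝ) * ((n:ℝ)+1) ^ (-(s.re+2)) * Real.Gamma 4))
    (contFn Y hY s n).aestronglyMeasurable ?_
  filter_upwards with v
  rw [normFn Y hY s n v]
  calc Y ^ (2:ℝ) * ((n:ℝ)+1) ^ (-(s.re+2)) * ‖Complex.Gamma (2+v*I)‖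
      ≤ Y ^ (2:ℝ) * ((n:ℝ)+1) ^ (-(s.re+2)) * (Real.Gamma 4 / (1 + v^2)) := by
        apply mul_le_mul_of_nonneg_left (gammaBound v) (by positivity)
    _ = Y ^ (2:ℝ) * ((n:ℝ)+1) ^ (-(s.re+2)) * Real.Gamma 4 * (1 + v^2)⁻¹ := by ring

end SmoothedZetaAux

open SmoothedZetaAux

/-- Mellin inversion applied termwise: for Y > 0 and Re s > −1,
∑_{n≥1} e^{−n/Y} n^{−s} = (1/2π) ∫_ℝ Y^{2+iv} ζ(s+2+iv) Γ(2+iv) dv,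
with the series converging absolutely and the integral converging absolutely. -/
theorem smoothed_zeta_mellin (Y : ℝ) (hY : 0 < Y) (s : ℂ) (hs : -1 < s.re) :
    Summable (fun n : ℕ =>
        ‖(Real.exp (-((n : ℝ) + 1) / Y) : ℂ) * ((n : ℂ) + 1) ^ (-s)‖) ∧
    MeasureTheory.Integrable (fun v : ℝ =>
        (Y : ℂ) ^ (2 + v * I) * riemannZeta (s + 2 + v * I) *
          Complex.Gamma (2 + v * I)) ∧
    ∑' n : ℕ, (Real.exp (-((n : ℝ) + 1) / Y) : ℂ) * ((n : ℂ) + 1) ^ (-s) =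
      (1 / (2 * (Real.pi : ℂ))) *
        ∫ v : ℝ, (Y : ℂ) ^ (2 + v * I) * riemannZeta (s + 2 + v * I) *
          Complex.Gamma (2 + v * I) := by
  refine ⟨part1 Y hY s hs, part2 Y hY s hs, ?_⟩
  set F : ℕ → ℝ → ℂ := fun n v =>
    (Y:ℂ)^(2+v*I) * ((n:ℂ)+1)^(-(s+2+v*I)) * Complex.Gamma (2+v*I) with hF
  have hsum_int : Summable fun n : ℕ => ∫ v : ℝ, ‖F n v‖ := by
    have heq : ∀ n : ℕ, (∫ v : ℝ, ‖F n v‖)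
        = ((n:ℝ)+1) ^ (-(s.re+2)) * (Y ^ (2:ℝ) * ∫ v : ℝ, ‖Complex.Gamma (2+v*I)‖) := by
      intro n
      have hptw : (fun v : ℝ => ‖F n v‖)
          = fun v : ℝ => (((n:ℝ)+1) ^ (-(s.re+2)) * Y ^ (2:ℝ)) * ‖Complex.Gamma (2+v*I)‖ := by
        funext v
        rw [hF]
        dsimp only
        rw [normFn Y hY s n v]
        ring
      rw [hptw, integral_const_mul, mul_assoc]
    refine Summable.congr ?_ (fun n => (heq n).symm)
    exact (hC_summable s hs).mul_right _
  have hfub := MeasureTheory.integral_tsum_of_summable_integral_norm (μ := MeasureTheory.volume) (F := F) (fun n => intFn Y hY s n) hsum_int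
  have htsum_eq : ∀ v : ℝ, ∑' n : ℕ, F n v
      = (Y:ℂ)^(2+v*I) * riemannZeta (s + 2 + v*I) * Complex.Gamma (2+v*I) := by
    intro v
    have hre : 1 < (s + 2 + v * I).re := by simp; linarith
    rw [zeta_eq_tsum_one_div_nat_add_one_cpow hre]
    have : ∀ n : ℕ, F n v = (Y:ℂ)^(2+v*I) * ((1 / ((n:ℂ)+1)^(s+2+v*I)) * Complex.Gamma (2+v*I)) := by
      intro n
      rw [hF]
      dsimp only
      rw [Complex.cpow_neg, one_div]
      ring
    rw [tsum_congr this, tsum_mul_left, tsum_mul_right]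
    ring
  calc ∑' n : ℕ, (Real.exp (-((n : ℝ) + 1) / Y) : ℂ) * ((n : ℂ) + 1) ^ (-s)
      = ∑' n : ℕ, ((1/(2*Real.pi) : ℝ) : ℂ) * ∫ v : ℝ, F n v := by
        refine tsum_congr fun n => ?_
        rw [term_eq Y hY s n, Complex.real_smul]
    _ = ((1/(2*Real.pi) : ℝ) : ℂ) * ∑' n : ℕ, ∫ v : ℝ, F n v := tsum_mul_left
    _ = ((1/(2*Real.pi) : ℝ) : ℂ) * ∫ v : ℝ, ∑' n : ℕ, F n v := by rw [hfub]
    _ = (1 / (2 * (Real.pi : ℂ))) *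
        ∫ v : ℝ, (Y : ℂ) ^ (2 + v * I) * riemannZeta (s + 2 + v * I) *
          Complex.Gamma (2 + v * I) := by
        congr 1
        · push_cast; ring
        · exact integral_congr_ae (Filter.Eventually.of_forall htsum_eq)
end

section
/- Suppose there exist constants C₁ > 0 and A ≥ 0 such that ∫₀^T |ζ(1/2 + it)|⁶ dt ≤ C₁ · T^{5/4} · (log T)^A for all T ≥ 2. Then for every ε > 0 there exists a constant C > 0 such that for all T ≥ 2, ∫₀^T |ζ(1/2 + it)|⁴ · ( ∫_{−(log T)²}^{(log T)²} |ζ(1/2 + i(t+v))| dv )² dt ≤ C · T^{5/4 + ε}. -/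
open Complex Filter Set MeasureTheory intervalIntegral
open scoped ComplexConjugate Topology



lemma HasDerivAt.conj_conj' {f : ℂ → ℂ} {d z : ℂ}
    (hf : HasDerivAt f d ((starRingEnd ℂ) z)) :
    HasDerivAt (fun w => conj (f (conj w))) (conj d) z := by
  rw [hasDerivAt_iff_tendsto_slope] at hf ⊢
  have hconj : Continuous (starRingEnd ℂ) := Complex.continuous_conj
  have h1 : Tendsto (fun w : ℂ => conj w) (𝓝[≠] z) (𝓝[≠] (conj z)) := by
    refine Tendsto.inf (hconj.tendsto z) (tendsto_principal_principal.2 ?_)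
    intro w hw h
    exact hw (by simpa using congrArg (starRingEnd ℂ) h)
  have h2 : Tendsto (starRingEnd ℂ) (𝓝 d) (𝓝 (conj d)) := hconj.tendsto d
  refine (h2.comp (hf.comp h1)).congr fun w => ?_
  simp only [Function.comp_apply, slope_def_field, ← map_sub]
  rw [map_div₀, Complex.conj_conj]

lemma riemannZeta_conj' {s : ℂ} (hs : s ≠ 1) :
    riemannZeta (conj s) = conj (riemannZeta s) := by
  have key : Set.EqOn (fun z => conj (riemannZeta (conj z))) riemannZeta {(1:ℂ)}ᶜ := by
    have hU : IsOpen ({(1:ℂ)}ᶜ) := isOpen_compl_singleton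
    have hpre : IsPreconnected ({(1:ℂ)}ᶜ) :=
      ((Set.countable_singleton (1:ℂ)).isConnected_compl_of_one_lt_rank
        (by simp [rank_real_complex])).isPreconnected
    have hF : AnalyticOnNhd ℂ (fun z => conj (riemannZeta (conj z))) {(1:ℂ)}ᶜ := by
      refine DifferentiableOn.analyticOnNhd (fun z hz => ?_) hU
      have hz1 : (starRingEnd ℂ) z ≠ 1 := fun h => hz (by simpa using congrArg (starRingEnd ℂ) h)
      exact ((differentiableAt_riemannZeta hz1).hasDerivAt.conj_conj').differentiableAt.differentiableWithinAt
    have hG : AnalyticOnNhd ℂ riemannZeta {(1:ℂ)}ᶜ :=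
      DifferentiableOn.analyticOnNhd
        (fun z hz => (differentiableAt_riemannZeta hz).differentiableWithinAt) hU
    have hFG : (fun z => conj (riemannZeta (conj z))) =ᶠ[𝓝 (2:ℂ)] riemannZeta := by
      have hV : {z : ℂ | 1 < re z} ∈ 𝓝 (2:ℂ) :=
        (continuous_re.isOpen_preimage _ isOpen_Ioi).mem_nhds (by norm_num)
      filter_upwards [hV] with t ht
      have h1 : 1 < re ((starRingEnd ℂ) t) := by simpa using ht
      rw [zeta_eq_tsum_one_div_nat_cpow h1, zeta_eq_tsum_one_div_nat_cpow ht,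
        starRingEnd_apply, tsum_star]
      refine tsum_congr fun n => ?_
      have harg : ((n:ℂ)).arg ≠ Real.pi := by
        rw [Complex.natCast_arg]; exact Real.pi_ne_zero.symm
      rw [← starRingEnd_apply, map_div₀, map_one, Complex.cpow_conj _ _ harg,
        Complex.conj_natCast, Complex.conj_conj]
    exact hF.eqOn_of_preconnected_of_eventuallyEq hG hpre (by norm_num) hFG
  have h2 := congrArg (starRingEnd ℂ) (key hs)
  simpa using h2

lemma abs_zeta_even (u : ℝ) :
    ‖riemannZeta (1/2 + (-u) * I)‖ = ‖riemannZeta (1/2 + u * I)‖ := by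
  have h1 : (1/2 + (-u:ℝ) * I : ℂ) = (starRingEnd ℂ) (1/2 + u * I) := by
    push_cast
    simp [Complex.ext_iff]
  have hne : (1/2 + (u:ℝ) * I : ℂ) ≠ 1 := by
    intro h
    have := congrArg Complex.re h
    simp at this
  rw [show ((1:ℂ)/2 + -(u:ℝ) * I) = (starRingEnd ℂ) (1/2 + u * I) by simpa using h1,
    riemannZeta_conj' hne, Complex.norm_conj]



/-- Hölder inequality on an interval for continuous nonneg functions. -/
lemma holder_interval {f g : ℝ → ℝ} (hf : Continuous f) (hg : Continuous g)
    (hf0 : ∀ x, 0 ≤ f x) (hg0 : ∀ x, 0 ≤ g x) {a b : ℝ} (hab : a ≤ b) {p q : ℝ}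
    (hpq : p.HolderConjugate q) :
    ∫ x in a..b, f x * g x ≤
      (∫ x in a..b, f x ^ p) ^ (1/p) * (∫ x in a..b, g x ^ q) ^ (1/q) := by
  rw [intervalIntegral.integral_of_le hab, intervalIntegral.integral_of_le hab,
    intervalIntegral.integral_of_le hab]
  set μ := volume.restrict (Set.Ioc a b) with hμ
  haveI : IsFiniteMeasure μ := ⟨by
    rw [hμ, Measure.restrict_apply_univ, Real.volume_Ioc]; exact ENNReal.ofReal_lt_top⟩
  have hmem : ∀ h : ℝ → ℝ, Continuous h → ∀ r : ENNReal, MemLp h r μ := by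
    intro h hh r
    obtain ⟨Cb, hCb⟩ :=
      (isCompact_Icc (a := a) (b := b)).exists_bound_of_continuousOn hh.continuousOn
    exact MemLp.of_bound hh.aestronglyMeasurable.restrict Cb
      ((ae_restrict_iff' measurableSet_Ioc).2 (Eventually.of_forall
        fun x hx => hCb x (Set.Ioc_subset_Icc_self hx)))
  exact integral_mul_le_Lp_mul_Lq_of_nonneg hpq
    (Eventually.of_forall hf0) (Eventually.of_forall hg0) (hmem f hf _) (hmem g hg _)

/-- Cauchy–Schwarz on an interval. -/
lemma cs_interval {h : ℝ → ℝ} (hh : Continuous h) (h0 : ∀ x, 0 ≤ h x) {a b : ℝ}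
    (hab : a ≤ b) :
    (∫ x in a..b, h x) ^ 2 ≤ (b - a) * ∫ x in a..b, h x ^ 2 := by
  have hpq : (2:ℝ).HolderConjugate 2 := Real.holderConjugate_iff.2 ⟨one_lt_two, by norm_num⟩
  have h1 := holder_interval continuous_const hh (fun _ => zero_le_one) h0 hab hpq
  simp only [one_mul] at h1
  have e1 : (∫ x in a..b, (1:ℝ) ^ (2:ℝ)) = b - a := by simp
  have e2 : (∫ x in a..b, h x ^ (2:ℝ)) = ∫ x in a..b, h x ^ (2:ℕ) := by
    refine intervalIntegral.integral_congr fun x _ => ?_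
    rw [← Real.rpow_natCast (h x) 2]; norm_num
  rw [e1, e2] at h1
  have hI2 : 0 ≤ ∫ x in a..b, h x ^ (2:ℕ) :=
    intervalIntegral.integral_nonneg hab fun x _ => pow_nonneg (h0 x) 2
  have hba : (0:ℝ) ≤ b - a := sub_nonneg.2 hab
  calc (∫ x in a..b, h x) ^ 2
      ≤ ((b - a) ^ (1/(2:ℝ)) * (∫ x in a..b, h x ^ (2:ℕ)) ^ (1/(2:ℝ))) ^ 2 := by
        refine pow_le_pow_left₀ (intervalIntegral.integral_nonneg hab fun x _ => h0 x) h1 2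
    _ = (b - a) * ∫ x in a..b, h x ^ (2:ℕ) := by
        rw [mul_pow, ← Real.rpow_natCast ((b-a) ^ (1/(2:ℝ))) 2,
          ← Real.rpow_natCast ((∫ x in a..b, h x ^ (2:ℕ)) ^ (1/(2:ℝ))) 2,
          ← Real.rpow_mul hba, ← Real.rpow_mul hI2]
        norm_num

/-- Hölder with exponents 3/2 and 3 applied to f⁴·g². -/
lemma holder_46 {f g : ℝ → ℝ} (hf : Continuous f) (hg : Continuous g)
    (hf0 : ∀ x, 0 ≤ f x) (hg0 : ∀ x, 0 ≤ g x) {a b : ℝ} (hab : a ≤ b) :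
    ∫ x in a..b, f x ^ 4 * g x ^ 2 ≤
      (∫ x in a..b, f x ^ 6) ^ ((2:ℝ)/3) * (∫ x in a..b, g x ^ 6) ^ ((1:ℝ)/3) := by
  have hpq : ((3:ℝ)/2).HolderConjugate 3 := Real.holderConjugate_iff.2 ⟨by norm_num, by norm_num⟩
  have h1 := holder_interval (f := fun x => f x ^ 4) (g := fun x => g x ^ 2) (hf.pow 4) (hg.pow 2)
    (fun x => pow_nonneg (hf0 x) 4) (fun x => pow_nonneg (hg0 x) 2) hab hpq
  have e1 : (∫ x in a..b, (f x ^ 4) ^ ((3:ℝ)/2)) = ∫ x in a..b, f x ^ 6 := by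
    refine intervalIntegral.integral_congr fun x _ => ?_
    rw [← Real.rpow_natCast (f x) 4, ← Real.rpow_mul (hf0 x), ← Real.rpow_natCast (f x) 6]
    norm_num
  have e2 : (∫ x in a..b, (g x ^ 2) ^ (3:ℝ)) = ∫ x in a..b, g x ^ 6 := by
    refine intervalIntegral.integral_congr fun x _ => ?_
    rw [← Real.rpow_natCast (g x) 2, ← Real.rpow_mul (hg0 x), ← Real.rpow_natCast (g x) 6]
    norm_num
  rw [e1, e2] at h1
  convert h1 using 3 <;> norm_num

/-- Continuity of a shifted interval integral in the shift parameter. -/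
lemma cont_shift_integral {g : ℝ → ℝ} (hg : Continuous g) (L : ℝ) :
    Continuous fun t : ℝ => ∫ v in (-L)..L, g (t + v) := by
  have h1 : ∀ t : ℝ, (∫ v in (-L)..L, g (t + v))
      = (∫ u in (0:ℝ)..(t + L), g u) - ∫ u in (0:ℝ)..(t + -L), g u := by
    intro t
    rw [intervalIntegral.integral_comp_add_left g,
      intervalIntegral.integral_interval_sub_left (hg.intervalIntegrable _ _)
        (hg.intervalIntegrable _ _)]
  simp only [h1]
  exact ((intervalIntegral.continuous_primitive (fun a b => hg.intervalIntegrable a b) 0).comp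
    (continuous_id.add continuous_const)).sub
    ((intervalIntegral.continuous_primitive (fun a b => hg.intervalIntegrable a b) 0).comp
    (continuous_id.add continuous_const))

/-- Fubini for a continuous function on a product of bounded intervals. -/
lemma ioc_swap {H : ℝ → ℝ → ℝ} (hH : Continuous fun p : ℝ × ℝ => H p.1 p.2) (T L : ℝ) :
    Integrable (Function.uncurry H)
        ((volume.restrict (Set.Ioc (0:ℝ) T)).prod (volume.restrict (Set.Ioc (-L) L))) ∧
    (∫ t in Set.Ioc (0:ℝ) T, ∫ v in Set.Ioc (-L) L, H t v)
      = ∫ v in Set.Ioc (-L) L, ∫ t in Set.Ioc (0:ℝ) T, H t v := by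
  have hint : Integrable (Function.uncurry H)
      ((volume.restrict (Set.Ioc (0:ℝ) T)).prod (volume.restrict (Set.Ioc (-L) L))) := by
    rw [Measure.prod_restrict, ← Measure.volume_eq_prod]
    refine IntegrableOn.mono_set ?_
      (Set.prod_mono Set.Ioc_subset_Icc_self Set.Ioc_subset_Icc_self)
    exact (hH.continuousOn).integrableOn_compact (isCompact_Icc.prod isCompact_Icc)
  exact ⟨hint, MeasureTheory.integral_integral_swap hint⟩


noncomputable def zf (u : ℝ) : ℝ := ‖riemannZeta (1 / 2 + u * I)‖

lemma zf_nonneg (u : ℝ) : 0 ≤ zf u := norm_nonneg _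

lemma zf_even (u : ℝ) : zf (-u) = zf u := by
  unfold zf
  rw [show ((-u : ℝ) : ℂ) = -(u : ℂ) from by push_cast; ring]
  exact abs_zeta_even u

lemma zf_cont : Continuous zf := by
  have h1 : Continuous fun u : ℝ => (1 / 2 + u * I : ℂ) := by continuity
  refine continuous_norm.comp (continuous_iff_continuousAt.2 fun u => ?_)
  refine ContinuousAt.comp ?_ h1.continuousAt
  refine (differentiableAt_riemannZeta ?_).continuousAt
  intro h; have := congrArg Complex.re h; simp at this

-- numeric final bound
lemma final_numeric {C₁ A ε T : ℝ} (hC₁ : 0 < C₁) (hA : 0 ≤ A) (hε : 0 < ε) (hT : 2 ≤ T) :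
    2 * Real.log T ^ 2 * (2 * Real.log T ^ 2 *
        (2 * C₁ * (5 * T) ^ ((5:ℝ)/4) * Real.log (5 * T) ^ A))
      ≤ (8 * C₁ * 5 ^ ((5:ℝ)/4 + ε) * ((A + 4)/ε) ^ (A + 4)) * T ^ ((5:ℝ)/4 + ε) := by
  have hT0 : (0:ℝ) < T := by linarith
  have h5T1 : (1:ℝ) < 5 * T := by linarith
  have hlogT0 : 0 ≤ Real.log T := Real.log_nonneg (by linarith)
  have hlog5 : 0 < Real.log (5 * T) := Real.log_pos h5T1
  set δ : ℝ := ε / (A + 4) with hδdef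
  have hδ : 0 < δ := div_pos hε (by linarith)
  have hA4 : (0:ℝ) < A + 4 := by linarith
  have key : (Real.log T ^ 2) ^ 2 * Real.log (5 * T) ^ A
      ≤ (5 * T) ^ ε * ((A + 4)/ε) ^ (A + 4) := by
    have h2 : (Real.log T ^ 2) ^ 2 ≤ Real.log (5 * T) ^ (4:ℕ) := by
      rw [show (Real.log T ^ 2) ^ 2 = Real.log T ^ (4:ℕ) by ring]
      exact pow_le_pow_left₀ hlogT0 (Real.log_le_log hT0 (by linarith)) 4
    have h3 : Real.log (5 * T) ^ (4:ℕ) * Real.log (5 * T) ^ A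
        = Real.log (5 * T) ^ (A + 4) := by
      rw [← Real.rpow_natCast (Real.log (5 * T)) 4, ← Real.rpow_add hlog5]
      norm_num [add_comm]
    calc (Real.log T ^ 2) ^ 2 * Real.log (5 * T) ^ A
        ≤ Real.log (5 * T) ^ (4:ℕ) * Real.log (5 * T) ^ A := by
          gcongr
      _ = Real.log (5 * T) ^ (A + 4) := h3
      _ ≤ ((5 * T) ^ δ / δ) ^ (A + 4) := by
          refine Real.rpow_le_rpow hlog5.le ?_ hA4.le
          exact Real.log_le_rpow_div (by linarith) hδ
      _ = (5 * T) ^ ε * ((A + 4)/ε) ^ (A + 4) := by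
          rw [Real.div_rpow (Real.rpow_nonneg (by linarith) δ) hδ.le,
            ← Real.rpow_mul (by linarith : (0:ℝ) ≤ 5 * T)]
          have hδε : δ * (A + 4) = ε := by
            rw [hδdef]; field_simp
          rw [hδε, div_eq_mul_one_div ((5*T) ^ ε), one_div]
          congr 1
          rw [show (A + 4)/ε = δ⁻¹ by rw [hδdef, inv_div], Real.inv_rpow hδ.le]
  calc 2 * Real.log T ^ 2 * (2 * Real.log T ^ 2 *
        (2 * C₁ * (5 * T) ^ ((5:ℝ)/4) * Real.log (5 * T) ^ A))
      = 8 * C₁ * (5 * T) ^ ((5:ℝ)/4) * ((Real.log T ^ 2) ^ 2 * Real.log (5 * T) ^ A) := by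
        ring
    _ ≤ 8 * C₁ * (5 * T) ^ ((5:ℝ)/4) * ((5 * T) ^ ε * ((A + 4)/ε) ^ (A + 4)) := by
        gcongr
    _ = (8 * C₁ * 5 ^ ((5:ℝ)/4 + ε) * ((A + 4)/ε) ^ (A + 4)) * T ^ ((5:ℝ)/4 + ε) := by
        have e1 : (5 * T:ℝ) ^ ((5:ℝ)/4) * (5 * T) ^ ε
            = 5 ^ ((5:ℝ)/4 + ε) * T ^ ((5:ℝ)/4 + ε) := by
          rw [← Real.rpow_add (by linarith : (0:ℝ) < 5 * T),
            Real.mul_rpow (by norm_num : (0:ℝ) ≤ 5) hT0.le]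
        calc 8 * C₁ * (5 * T) ^ ((5:ℝ)/4) * ((5 * T) ^ ε * ((A + 4)/ε) ^ (A + 4))
            = 8 * C₁ * ((5 * T) ^ ((5:ℝ)/4) * (5 * T) ^ ε) * ((A + 4)/ε) ^ (A + 4) := by ring
          _ = _ := by rw [e1]; ring

lemma main_aux (C₁ : ℝ) (hC₁ : 0 < C₁) (A : ℝ) (hA : 0 ≤ A)
    (hsixth : ∀ T : ℝ, 2 ≤ T → (∫ t in (0:ℝ)..T, zf t ^ 6) ≤
        C₁ * T ^ ((5:ℝ)/4) * Real.log T ^ A)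
    (ε : ℝ) (hε : 0 < ε) :
    ∃ C : ℝ, 0 < C ∧ ∀ T : ℝ, 2 ≤ T →
      (∫ t in (0:ℝ)..T, zf t ^ 4 *
        (∫ v in (-(Real.log T ^ 2))..(Real.log T ^ 2), zf (t + v)) ^ 2)
      ≤ C * T ^ ((5:ℝ)/4 + ε) := by
  refine ⟨8 * C₁ * 5 ^ ((5:ℝ)/4 + ε) * ((A + 4)/ε) ^ (A + 4), by positivity, fun T hT => ?_⟩
  set L : ℝ := Real.log T ^ 2 with hLdef
  have hT0 : (0:ℝ) < T := by linarith
  have hT1 : (1:ℝ) < T := by linarith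
  have hlogT : 0 < Real.log T := Real.log_pos hT1
  have hL0 : 0 < L := by rw [hLdef]; positivity
  have hLL : -L ≤ L := by linarith
  have hL4T : L ≤ 4 * T := by
    have h1 : Real.log (Real.sqrt T) ≤ Real.sqrt T - 1 :=
      Real.log_le_sub_one_of_pos (Real.sqrt_pos.2 hT0)
    have h2 : Real.log (Real.sqrt T) = Real.log T / 2 := Real.log_sqrt hT0.le
    have hs : Real.log T ≤ 2 * Real.sqrt T := by nlinarith [Real.sqrt_nonneg T]
    calc L = Real.log T ^ 2 := hLdef
      _ ≤ (2 * Real.sqrt T) ^ 2 := pow_le_pow_left₀ hlogT.le hs 2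
      _ = 4 * T := by rw [mul_pow, Real.sq_sqrt hT0.le]; norm_num
  have hTL2 : (2:ℝ) ≤ T + L := by linarith
  have hTL5 : T + L ≤ 5 * T := by linarith
  set M : ℝ := 2 * C₁ * (5 * T) ^ ((5:ℝ)/4) * Real.log (5 * T) ^ A with hMdef
  have hlog5 : 0 < Real.log (5 * T) := Real.log_pos (by linarith)
  have hM0 : 0 < M := by rw [hMdef]; positivity
  have hint6 : ∀ a b : ℝ, IntervalIntegrable (fun u => zf u ^ 6) volume a b :=
    fun a b => (zf_cont.pow 6).intervalIntegrable a b
  have h6nonneg : ∀ u : ℝ, 0 ≤ zf u ^ 6 := fun u => pow_nonneg (zf_nonneg u) 6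
  have hhalf : ∀ b : ℝ, 2 ≤ b → b ≤ 5 * T → (∫ u in (0:ℝ)..b, zf u ^ 6) ≤ M / 2 := by
    intro b hb2 hb5
    calc (∫ u in (0:ℝ)..b, zf u ^ 6)
        ≤ C₁ * b ^ ((5:ℝ)/4) * Real.log b ^ A := hsixth _ hb2
      _ ≤ C₁ * (5 * T) ^ ((5:ℝ)/4) * Real.log (5 * T) ^ A := by
          have h1 : b ^ ((5:ℝ)/4) ≤ (5 * T) ^ ((5:ℝ)/4) :=
            Real.rpow_le_rpow (by linarith) hb5 (by norm_num)
          have h2 : Real.log b ^ A ≤ Real.log (5 * T) ^ A :=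
            Real.rpow_le_rpow (Real.log_nonneg (by linarith))
              (Real.log_le_log (by linarith) hb5) hA
          have h3 : 0 ≤ Real.log b ^ A := Real.rpow_nonneg (Real.log_nonneg (by linarith)) A
          have h4 : 0 ≤ C₁ * (5 * T) ^ ((5:ℝ)/4) := by positivity
          exact mul_le_mul (mul_le_mul_of_nonneg_left h1 hC₁.le) h2 h3 h4
      _ = M / 2 := by rw [hMdef]; ring
  have hshift : ∀ v : ℝ, -L ≤ v → v ≤ L → (∫ t in (0:ℝ)..T, zf (t + v) ^ 6) ≤ M := by
    intro v hv1 hv2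
    have e1 : (∫ t in (0:ℝ)..T, zf (t + v) ^ 6) = ∫ u in (0+v)..(T + v), zf u ^ 6 :=
      intervalIntegral.integral_comp_add_right (fun u => zf u ^ 6) v
    rw [e1, zero_add]
    have e2 : (∫ u in v..(T + v), zf u ^ 6) ≤ ∫ u in (-L)..(T + L), zf u ^ 6 :=
      intervalIntegral.integral_mono_interval hv1 (by linarith) (by linarith)
        (Eventually.of_forall fun u => h6nonneg u) (hint6 _ _)
    have e3 : (∫ u in (-L)..(T + L), zf u ^ 6)
        = (∫ u in (-L)..(0:ℝ), zf u ^ 6) + ∫ u in (0:ℝ)..(T + L), zf u ^ 6 :=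
      (intervalIntegral.integral_add_adjacent_intervals (hint6 _ _) (hint6 _ _)).symm
    have e4 : (∫ u in (-L)..(0:ℝ), zf u ^ 6) = ∫ u in (0:ℝ)..L, zf u ^ 6 := by
      have h := intervalIntegral.integral_comp_neg (a := (0:ℝ)) (b := L) (fun u => zf u ^ 6)
      rw [neg_zero] at h
      rw [← h]
      exact intervalIntegral.integral_congr fun x _ => by rw [zf_even]
    have e5 : (∫ u in (0:ℝ)..L, zf u ^ 6) ≤ M / 2 := by
      refine le_trans ?_ (hhalf (T + L) hTL2 hTL5)
      exact intervalIntegral.integral_mono_interval le_rfl hL0.le (by linarith)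
        (Eventually.of_forall fun u => h6nonneg u) (hint6 _ _)
    have e6 := hhalf (T + L) hTL2 hTL5
    calc (∫ u in v..(T + v), zf u ^ 6) ≤ ∫ u in (-L)..(T + L), zf u ^ 6 := e2
      _ = (∫ u in (-L)..(0:ℝ), zf u ^ 6) + ∫ u in (0:ℝ)..(T + L), zf u ^ 6 := e3
      _ ≤ M / 2 + M / 2 := add_le_add (e4 ▸ e5) e6
      _ = M := by ring
  have hIcont : Continuous fun t : ℝ => ∫ v in (-L)..L, zf (t + v) :=
    cont_shift_integral zf_cont L
  have hI2cont : Continuous fun t : ℝ => ∫ v in (-L)..L, zf (t + v) ^ 2 :=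
    cont_shift_integral (zf_cont.pow 2) L
  have hCS : ∀ t : ℝ, (∫ v in (-L)..L, zf (t + v)) ^ 2
      ≤ 2 * L * ∫ v in (-L)..L, zf (t + v) ^ 2 := by
    intro t
    have h := cs_interval (h := fun v => zf (t + v))
      (zf_cont.comp (continuous_const.add continuous_id)) (fun v => zf_nonneg _) hLL
    rw [show L - -L = 2 * L by ring] at h
    exact h
  have hmono1 : (∫ t in (0:ℝ)..T, zf t ^ 4 * (∫ v in (-L)..L, zf (t + v)) ^ 2)
      ≤ ∫ t in (0:ℝ)..T, zf t ^ 4 * (2 * L * ∫ v in (-L)..L, zf (t + v) ^ 2) := by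
    refine intervalIntegral.integral_mono_on hT0.le
      (((zf_cont.pow 4).mul (hIcont.pow 2)).intervalIntegrable _ _)
      (((zf_cont.pow 4).mul (continuous_const.mul hI2cont)).intervalIntegrable _ _)
      (fun x _ => mul_le_mul_of_nonneg_left (hCS x) (pow_nonneg (zf_nonneg x) 4))
  have hre : (∫ t in (0:ℝ)..T, zf t ^ 4 * (2 * L * ∫ v in (-L)..L, zf (t + v) ^ 2))
      = 2 * L * ∫ t in (0:ℝ)..T, ∫ v in (-L)..L, zf t ^ 4 * zf (t + v) ^ 2 := by
    rw [← intervalIntegral.integral_const_mul]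
    refine intervalIntegral.integral_congr fun t _ => ?_
    calc zf t ^ 4 * (2 * L * ∫ v in (-L)..L, zf (t + v) ^ 2)
        = 2 * L * (zf t ^ 4 * ∫ v in (-L)..L, zf (t + v) ^ 2) := by ring
      _ = 2 * L * ∫ v in (-L)..L, zf t ^ 4 * zf (t + v) ^ 2 := by
          rw [intervalIntegral.integral_const_mul]
  have hcontH : Continuous fun p : ℝ × ℝ => zf p.1 ^ 4 * zf (p.1 + p.2) ^ 2 :=
    ((zf_cont.comp continuous_fst).pow 4).mul
      ((zf_cont.comp (continuous_fst.add continuous_snd)).pow 2)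
  obtain ⟨hint, hswap⟩ := ioc_swap (H := fun t v => zf t ^ 4 * zf (t + v) ^ 2) hcontH T L
  have hDD : (∫ t in (0:ℝ)..T, ∫ v in (-L)..L, zf t ^ 4 * zf (t + v) ^ 2)
      = ∫ v in Set.Ioc (-L) L, ∫ t in Set.Ioc (0:ℝ) T, zf t ^ 4 * zf (t + v) ^ 2 := by
    simp only [intervalIntegral.integral_of_le hLL, intervalIntegral.integral_of_le hT0.le]
    exact hswap
  have hGint : Integrable (fun v => ∫ t in Set.Ioc (0:ℝ) T, zf t ^ 4 * zf (t + v) ^ 2)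
      (volume.restrict (Set.Ioc (-L) L)) := hint.integral_prod_right
  have hptwise : ∀ v ∈ Set.Ioc (-L) L,
      (∫ t in Set.Ioc (0:ℝ) T, zf t ^ 4 * zf (t + v) ^ 2) ≤ M := by
    intro v hv
    rw [← intervalIntegral.integral_of_le hT0.le]
    have h46 := holder_46 (g := fun t => zf (t + v)) zf_cont
      (zf_cont.comp (continuous_id.add continuous_const)) zf_nonneg
      (fun x => zf_nonneg _) hT0.le
    refine h46.trans ?_
    have b1 : (∫ t in (0:ℝ)..T, zf t ^ 6) ≤ M := by
      refine le_trans ?_ (le_of_lt (by linarith : M / 2 < M))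
      exact hhalf T hT (by linarith)
    have b2 : (∫ t in (0:ℝ)..T, zf (t + v) ^ 6) ≤ M := hshift v hv.1.le hv.2
    have i1 : 0 ≤ ∫ t in (0:ℝ)..T, zf t ^ 6 :=
      intervalIntegral.integral_nonneg hT0.le fun u _ => h6nonneg u
    have i2 : 0 ≤ ∫ t in (0:ℝ)..T, zf (t + v) ^ 6 :=
      intervalIntegral.integral_nonneg hT0.le fun u _ => h6nonneg _
    calc (∫ t in (0:ℝ)..T, zf t ^ 6) ^ ((2:ℝ)/3) *
          (∫ t in (0:ℝ)..T, zf (t + v) ^ 6) ^ ((1:ℝ)/3)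
        ≤ M ^ ((2:ℝ)/3) * M ^ ((1:ℝ)/3) := by
          have g1 : (∫ t in (0:ℝ)..T, zf t ^ 6) ^ ((2:ℝ)/3) ≤ M ^ ((2:ℝ)/3) :=
            Real.rpow_le_rpow i1 b1 (by norm_num)
          have g2 : (∫ t in (0:ℝ)..T, zf (t + v) ^ 6) ^ ((1:ℝ)/3) ≤ M ^ ((1:ℝ)/3) :=
            Real.rpow_le_rpow i2 b2 (by norm_num)
          exact mul_le_mul g1 g2 (Real.rpow_nonneg i2 _) (Real.rpow_nonneg hM0.le _)
      _ = M := by rw [← Real.rpow_add hM0]; norm_num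
  have hvbound : (∫ v in Set.Ioc (-L) L,
      ∫ t in Set.Ioc (0:ℝ) T, zf t ^ 4 * zf (t + v) ^ 2) ≤ 2 * L * M := by
    calc (∫ v in Set.Ioc (-L) L, ∫ t in Set.Ioc (0:ℝ) T, zf t ^ 4 * zf (t + v) ^ 2)
        ≤ ∫ _v in Set.Ioc (-L) L, M :=
          setIntegral_mono_on hGint
            (integrableOn_const (by rw [Real.volume_Ioc]; exact ENNReal.ofReal_ne_top))
            measurableSet_Ioc hptwise
      _ = (volume (Set.Ioc (-L) L)).toReal * M := by rw [setIntegral_const, smul_eq_mul, measureReal_def]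
      _ = 2 * L * M := by
          rw [Real.volume_Ioc, ENNReal.toReal_ofReal (by linarith)]
          ring
  calc (∫ t in (0:ℝ)..T, zf t ^ 4 * (∫ v in (-L)..L, zf (t + v)) ^ 2)
      ≤ ∫ t in (0:ℝ)..T, zf t ^ 4 * (2 * L * ∫ v in (-L)..L, zf (t + v) ^ 2) := hmono1
    _ = 2 * L * ∫ t in (0:ℝ)..T, ∫ v in (-L)..L, zf t ^ 4 * zf (t + v) ^ 2 := hre
    _ = 2 * L * ∫ v in Set.Ioc (-L) L, ∫ t in Set.Ioc (0:ℝ) T, zf t ^ 4 * zf (t + v) ^ 2 := by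
        rw [hDD]
    _ ≤ 2 * L * (2 * L * M) := by
        refine mul_le_mul_of_nonneg_left hvbound (by linarith)
    _ ≤ (8 * C₁ * 5 ^ ((5:ℝ)/4 + ε) * ((A + 4)/ε) ^ (A + 4)) * T ^ ((5:ℝ)/4 + ε) := by
        rw [hLdef, hMdef]
        exact final_numeric hC₁ hA hε hT


/-- Assuming the sixth-moment bound ∫₀^T |ζ(1/2+it)|⁶ dt ≤ C₁ T^{5/4} (log T)^A,
one has ∫₀^T |ζ(1/2+it)|⁴ (∫_{−log²T}^{log²T} |ζ(1/2+i(t+v))| dv)² dt ≪_ε T^{5/4+ε}. -/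
theorem fourth_moment_short_average_bound
    (C₁ : ℝ) (hC₁ : 0 < C₁) (A : ℝ) (hA : 0 ≤ A)
    (hsixth : ∀ T : ℝ, 2 ≤ T →
      (∫ t in (0:ℝ)..T, ‖riemannZeta (1 / 2 + t * I)‖ ^ 6) ≤
        C₁ * T ^ ((5 : ℝ) / 4) * Real.log T ^ A)
    (ε : ℝ) (hε : 0 < ε) :
    ∃ C : ℝ, 0 < C ∧ ∀ T : ℝ, 2 ≤ T →
      (∫ t in (0:ℝ)..T,
          ‖riemannZeta (1 / 2 + t * I)‖ ^ 4 *
            (∫ v in (-(Real.log T ^ 2))..(Real.log T ^ 2),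
                ‖riemannZeta (1 / 2 + (t + v) * I)‖) ^ 2) ≤
        C * T ^ ((5 : ℝ) / 4 + ε) := by
  simp only [← Complex.ofReal_add]
  exact main_aux C₁ hC₁ A hA hsixth ε hε
end

section
/- Let k, ℓ be real numbers with 0 ≤ k ≤ ℓ ≤ 1 and ℓ − k < 1, and suppose there is a constant A > 0 such that for all T ≥ 2, all t ∈ [T, 2T], and all real N, N' with 1 ≤ N < N' ≤ 2N ≤ 2T, one has |∑_{N < n ≤ N'} n^{it}| ≤ A · T^k · N^{ℓ−k}. Then there exists a constant C > 0 (depending only on k, ℓ, A) such that for all T ≥ 2, all t ∈ [T, 2T], and all real u with 1 ≤ u ≤ T, one has |∑_{m ≤ √u} m^{it} · ∑_{n ≤ u/m} n^{it}| ≤ C · T^k · u^{(ℓ−k+1)/2} · log T and |∑_{m ≤ √u} m^{it}| ≤ C · T^k · u^{(ℓ−k)/2} · log T. -/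
open Complex



private lemma abs_cpow_nat (t : ℝ) (n : ℕ) (hn : 1 ≤ n) :
    ‖(n : ℂ) ^ ((t : ℂ) * I)‖ = 1 := by
  have h0 : (0:ℝ) < (n:ℝ) := by exact_mod_cast hn
  rw [show ((n:ℂ)) = (((n:ℝ)):ℂ) by norm_cast,
    Complex.norm_cpow_eq_rpow_re_of_pos h0]
  simp

private lemma rpow_increment {b : ℝ} (hb0 : 0 < b) (hb1 : b ≤ 1) {x : ℝ} (hx : 1 ≤ x) :
    b * x ^ (b - 1) ≤ x ^ b - (x - 1) ^ b := by
  have hx0 : 0 < x := lt_of_lt_of_le one_pos hx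
  have hs : -1 ≤ -(1/x) := by
    have : 1/x ≤ 1 := by
      rw [div_le_one hx0]; exact hx
    linarith
  have hber := rpow_one_add_le_one_add_mul_self (s := -(1/x)) hs hb0.le hb1
  have h1 : x - 1 = x * (1 + -(1/x)) := by field_simp; ring
  have h2 : (x - 1) ^ b = x ^ b * (1 + -(1/x)) ^ b := by
    rw [h1, Real.mul_rpow hx0.le (by nlinarith [hs])]
  have h3 : (x - 1) ^ b ≤ x ^ b * (1 + b * -(1/x)) := by
    rw [h2]
    exact mul_le_mul_of_nonneg_left hber (Real.rpow_nonneg hx0.le b)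
  have h4 : x ^ b * (1/x) = x ^ (b - 1) := by
    rw [Real.rpow_sub hx0, Real.rpow_one]; ring
  nlinarith [h3, h4]

private lemma sum_rpow_neg_le {a : ℝ} (ha0 : 0 ≤ a) (ha1 : a < 1) (M : ℕ) :
    (1 - a) * ∑ m ∈ Finset.Icc 1 M, (m:ℝ) ^ (-a) ≤ (1 - a) + (M:ℝ) ^ (1 - a) := by
  induction M with
  | zero => simp [Real.zero_rpow (by linarith : (1:ℝ) - a ≠ 0)]; linarith
  | succ M ih =>
    rw [Finset.sum_Icc_succ_top (Nat.one_le_iff_ne_zero.mpr (Nat.succ_ne_zero M))]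
    have hkey := rpow_increment (b := 1 - a) (by linarith) (by linarith)
      (x := (M:ℝ) + 1) (by have : (0:ℝ) ≤ (M:ℝ) := Nat.cast_nonneg M; linarith)
    have hb1 : (1:ℝ) - a - 1 = -a := by ring
    have hx1 : ((M:ℝ) + 1) - 1 = (M:ℝ) := by ring
    rw [hb1, hx1] at hkey
    have hcast : ((M + 1 : ℕ) : ℝ) = (M:ℝ) + 1 := by push_cast; ring
    rw [hcast]
    nlinarith [ih, hkey]

private lemma dyadic_bound (k ℓ A : ℝ) (hk0 : 0 ≤ k) (ha : 0 ≤ ℓ - k) (hA : 0 < A)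
    (hexp : ∀ T : ℝ, 2 ≤ T → ∀ t ∈ Set.Icc T (2 * T), ∀ N N' : ℝ,
      1 ≤ N → N < N' → N' ≤ 2 * N → 2 * N ≤ 2 * T →
      ‖∑ n ∈ Finset.Ioc ⌊N⌋₊ ⌊N'⌋₊, (n : ℂ) ^ ((t : ℂ) * I)‖ ≤
        A * T ^ k * N ^ (ℓ - k))
    (T : ℝ) (hT : 2 ≤ T) (t : ℝ) (ht : t ∈ Set.Icc T (2 * T)) :
    ∀ J : ℕ, ∀ M : ℝ, 1 ≤ M → M ≤ T → M ≤ 2 ^ J →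
    ‖∑ n ∈ Finset.Icc 1 ⌊M⌋₊, (n : ℂ) ^ ((t : ℂ) * I)‖ ≤
      1 + A * T ^ k * M ^ (ℓ - k) * J := by
  have hT0 : (0:ℝ) < T := by linarith
  have hTk : (0:ℝ) ≤ T ^ k := Real.rpow_nonneg hT0.le k
  intro J
  induction J with
  | zero =>
    intro M hM1 hMT hM2
    have hM : M = 1 := le_antisymm (by simpa using hM2) hM1
    subst hM
    rw [Nat.floor_one, Finset.Icc_self, Finset.sum_singleton]
    simp only [Nat.cast_one, Complex.one_cpow, norm_one, Nat.cast_zero, mul_zero]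
    linarith
  | succ J ih =>
    intro M hM1 hMT hM2
    have hMa0 : (0:ℝ) ≤ M ^ (ℓ - k) := Real.rpow_nonneg (by linarith) _
    have hRHS0 : (0:ℝ) ≤ A * T ^ k * M ^ (ℓ - k) :=
      mul_nonneg (mul_nonneg hA.le hTk) hMa0
    by_cases hM2' : M < 2
    · have hfl : ⌊M⌋₊ = 1 := (Nat.floor_eq_iff (by linarith)).mpr ⟨by simpa using hM1, by norm_num; linarith⟩
      rw [hfl, Finset.Icc_self, Finset.sum_singleton]
      simp only [Nat.cast_one, Complex.one_cpow, norm_one]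
      nlinarith [mul_nonneg hRHS0 (Nat.cast_nonneg (α := ℝ) (J+1))]
    · push_neg at hM2'
      -- split the sum
      have hle : ⌊M/2⌋₊ ≤ ⌊M⌋₊ := Nat.floor_mono (by linarith)
      have hsplit : (∑ n ∈ Finset.Icc 1 ⌊M⌋₊, (n : ℂ) ^ ((t : ℂ) * I)) =
          (∑ n ∈ Finset.Icc 1 ⌊M/2⌋₊, (n : ℂ) ^ ((t : ℂ) * I)) +
          ∑ n ∈ Finset.Ioc ⌊M/2⌋₊ ⌊M⌋₊, (n : ℂ) ^ ((t : ℂ) * I) := by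
        rw [show Finset.Icc 1 ⌊M⌋₊ = Finset.Ioc 0 ⌊M⌋₊ from Finset.Icc_add_one_left_eq_Ioc 0 _,
          show Finset.Icc 1 ⌊M/2⌋₊ = Finset.Ioc 0 ⌊M/2⌋₊ from Finset.Icc_add_one_left_eq_Ioc 0 _,
          Finset.sum_Ioc_consecutive _ (Nat.zero_le _) hle]
      have h1 : ‖∑ n ∈ Finset.Icc 1 ⌊M/2⌋₊, (n : ℂ) ^ ((t : ℂ) * I)‖ ≤
          1 + A * T ^ k * (M/2) ^ (ℓ - k) * J :=
        ih (M/2) (by linarith) (by linarith) (by rw [pow_succ] at hM2; linarith)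
      have h2 : ‖∑ n ∈ Finset.Ioc ⌊M/2⌋₊ ⌊M⌋₊, (n : ℂ) ^ ((t : ℂ) * I)‖ ≤
          A * T ^ k * (M/2) ^ (ℓ - k) :=
        hexp T hT t ht (M/2) M (by linarith) (by linarith) (by linarith) (by linarith)
      have hmono : (M/2) ^ (ℓ - k) ≤ M ^ (ℓ - k) :=
        Real.rpow_le_rpow (by linarith) (by linarith) ha
      have htri := norm_add_le
        (∑ n ∈ Finset.Icc 1 ⌊M/2⌋₊, (n : ℂ) ^ ((t : ℂ) * I))
        (∑ n ∈ Finset.Ioc ⌊M/2⌋₊ ⌊M⌋₊, (n : ℂ) ^ ((t : ℂ) * I))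
      rw [← hsplit] at htri
      have hcast : ((J + 1 : ℕ) : ℝ) = (J : ℝ) + 1 := by push_cast; ring
      rw [hcast]
      have hATk : (0:ℝ) ≤ A * T ^ k := mul_nonneg hA.le hTk
      have hJ0 : (0:ℝ) ≤ (J:ℝ) := Nat.cast_nonneg J
      nlinarith [mul_le_mul_of_nonneg_left hmono hATk,
        mul_le_mul_of_nonneg_right (mul_le_mul_of_nonneg_left hmono hATk) hJ0]

private lemma one_le_rpow' {x y : ℝ} (hx : 1 ≤ x) (hy : 0 ≤ y) : 1 ≤ x ^ y := by
  calc (1:ℝ) = x ^ (0:ℝ) := (Real.rpow_zero x).symm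
    _ ≤ x ^ y := Real.rpow_le_rpow_of_exponent_le hx hy

set_option maxHeartbeats 1000000 in
/-- Estimates for the hyperbola-method sums S₁, S₂ via an exponent pair (k, ℓ):
|∑_{m ≤ √u} m^{it} ∑_{n ≤ u/m} n^{it}| ≤ C T^k u^{(ℓ−k+1)/2} log T and
|∑_{m ≤ √u} m^{it}| ≤ C T^k u^{(ℓ−k)/2} log T, for T ≤ t ≤ 2T and 1 ≤ u ≤ T. -/
theorem hyperbola_sums_exponent_pair_bounds
    (k ℓ : ℝ) (hk0 : 0 ≤ k) (hkl : k ≤ ℓ) (hl1 : ℓ ≤ 1) (hlk : ℓ - k < 1)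
    (A : ℝ) (hA : 0 < A)
    (hexp : ∀ T : ℝ, 2 ≤ T → ∀ t ∈ Set.Icc T (2 * T), ∀ N N' : ℝ,
      1 ≤ N → N < N' → N' ≤ 2 * N → 2 * N ≤ 2 * T →
      ‖∑ n ∈ Finset.Ioc ⌊N⌋₊ ⌊N'⌋₊, (n : ℂ) ^ ((t : ℂ) * I)‖ ≤
        A * T ^ k * N ^ (ℓ - k)) :
    ∃ C : ℝ, 0 < C ∧ ∀ T : ℝ, 2 ≤ T → ∀ t ∈ Set.Icc T (2 * T),
      ∀ u : ℝ, 1 ≤ u → u ≤ T →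
      ‖∑ m ∈ Finset.Icc 1 ⌊Real.sqrt u⌋₊,
          (m : ℂ) ^ ((t : ℂ) * I) *
            ∑ n ∈ Finset.Icc 1 ⌊u / (m : ℝ)⌋₊, (n : ℂ) ^ ((t : ℂ) * I)‖ ≤
        C * T ^ k * u ^ ((ℓ - k + 1) / 2) * Real.log T ∧
      ‖∑ m ∈ Finset.Icc 1 ⌊Real.sqrt u⌋₊, (m : ℂ) ^ ((t : ℂ) * I)‖ ≤
        C * T ^ k * u ^ ((ℓ - k) / 2) * Real.log T := by
  have h1a : 0 < 1 - (ℓ - k) := by linarith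
  have hc' : 0 < 1 + 1 / (1 - (ℓ - k)) := by
    have := one_div_pos.mpr h1a; linarith
  refine ⟨3 * A * (1 + 1 / (1 - (ℓ - k))) + 3 * A + 2, by nlinarith, ?_⟩
  intro T hT t ht u hu1 huT
  have hT0 : (0:ℝ) < T := by linarith
  have hT1 : (1:ℝ) ≤ T := by linarith
  have hu0 : (0:ℝ) < u := by linarith
  have hP1 : (1:ℝ) ≤ T ^ k := one_le_rpow' hT1 hk0
  have hP0 : (0:ℝ) ≤ T ^ k := by linarith
  have hsu1 : (1:ℝ) ≤ Real.sqrt u := Real.one_le_sqrt.mpr hu1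
  have hsuu : Real.sqrt u ≤ u := by
    have h := Real.sqrt_le_sqrt (show u ≤ u * u by nlinarith)
    rwa [Real.sqrt_mul_self hu0.le] at h
  have hlog2T : Real.log 2 ≤ Real.log T := Real.log_le_log (by norm_num) hT
  have hlog2 : (0.6931471803 : ℝ) < Real.log 2 := Real.log_two_gt_d9
  have hL : (1/2 : ℝ) ≤ Real.log T := by linarith
  set J : ℕ := ⌊Real.logb 2 T⌋₊ + 1 with hJdef
  have hlogb0 : (0:ℝ) ≤ Real.logb 2 T := by
    rw [Real.logb]
    positivity
  have hJle : Real.logb 2 T ≤ (J : ℝ) := by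
    push_cast [hJdef]
    linarith [Nat.lt_floor_add_one (Real.logb 2 T)]
  have hTpow : T ≤ (2:ℝ) ^ J := by
    calc T = (2:ℝ) ^ Real.logb 2 T :=
          (Real.rpow_logb (by norm_num) (by norm_num) hT0).symm
      _ ≤ (2:ℝ) ^ ((J:ℝ)) := Real.rpow_le_rpow_of_exponent_le one_le_two hJle
      _ = (2:ℝ) ^ J := Real.rpow_natCast 2 J
  have hJ3 : (J:ℝ) ≤ 3 * Real.log T := by
    have hfl : (⌊Real.logb 2 T⌋₊ : ℝ) ≤ Real.logb 2 T := Nat.floor_le hlogb0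
    have hlogb1 : 1 ≤ Real.logb 2 T := by
      rw [Real.logb, le_div_iff₀ (by linarith : (0:ℝ) < Real.log 2)]
      linarith
    have hlogbval : Real.logb 2 T = Real.log T / Real.log 2 := rfl
    have : Real.logb 2 T * Real.log 2 = Real.log T := by
      rw [hlogbval]; field_simp
    push_cast [hJdef]
    nlinarith [hfl, hlogb1, this, hlog2]
  have D := dyadic_bound k ℓ A hk0 (by linarith) hA hexp T hT t ht J
  -- second bound (S₂)
  have hsq : Real.sqrt u ^ (ℓ - k) = u ^ ((ℓ - k) / 2) := by
    rw [Real.sqrt_eq_rpow, ← Real.rpow_mul hu0.le,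
      show 1 / (2:ℝ) * (ℓ - k) = (ℓ - k) / 2 by ring]
  have hE1 : (1:ℝ) ≤ u ^ ((ℓ - k) / 2) := one_le_rpow' hu1 (by linarith)
  have hS2 : ‖∑ m ∈ Finset.Icc 1 ⌊Real.sqrt u⌋₊, (m : ℂ) ^ ((t : ℂ) * I)‖ ≤
      (3 * A * (1 + 1 / (1 - (ℓ - k))) + 3 * A + 2) * T ^ k * u ^ ((ℓ - k) / 2) *
        Real.log T := by
    have h := D (Real.sqrt u) hsu1 (hsuu.trans huT) ((hsuu.trans huT).trans hTpow)
    rw [hsq] at h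
    refine h.trans ?_
    have hAE : (0:ℝ) ≤ A * T ^ k * u ^ ((ℓ - k) / 2) := by positivity
    nlinarith [mul_le_mul_of_nonneg_left hJ3 hAE,
      mul_nonneg (mul_nonneg hAE hc'.le) (by linarith : (0:ℝ) ≤ Real.log T),
      mul_le_mul (mul_le_mul hP1 hE1 (by norm_num) hP0) hL (by norm_num)
        (mul_nonneg hP0 (by linarith))]
  refine ⟨?_, hS2⟩
  -- first bound (S₁)
  have hM0le : ((⌊Real.sqrt u⌋₊ : ℕ) : ℝ) ≤ Real.sqrt u := Nat.floor_le (Real.sqrt_nonneg u)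
  have hfloor1 : (1:ℝ) ≤ (⌊Real.sqrt u⌋₊ : ℝ) := by
    exact_mod_cast Nat.le_floor (by exact_mod_cast hsu1 : ((1:ℕ):ℝ) ≤ Real.sqrt u)
  have habs1 : ‖∑ m ∈ Finset.Icc 1 ⌊Real.sqrt u⌋₊,
      (m : ℂ) ^ ((t : ℂ) * I) *
        ∑ n ∈ Finset.Icc 1 ⌊u / (m : ℝ)⌋₊, (n : ℂ) ^ ((t : ℂ) * I)‖ ≤
      ∑ m ∈ Finset.Icc 1 ⌊Real.sqrt u⌋₊,
        ‖∑ n ∈ Finset.Icc 1 ⌊u / (m : ℝ)⌋₊, (n : ℂ) ^ ((t : ℂ) * I)‖ := by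
    refine (norm_sum_le _ _).trans (le_of_eq (Finset.sum_congr rfl ?_))
    intro m hm
    rw [norm_mul, abs_cpow_nat t m (Finset.mem_Icc.mp hm).1, one_mul]
  have hinner : ∀ m ∈ Finset.Icc 1 ⌊Real.sqrt u⌋₊,
      ‖∑ n ∈ Finset.Icc 1 ⌊u / (m : ℝ)⌋₊, (n : ℂ) ^ ((t : ℂ) * I)‖ ≤
      1 + (3 * A * T ^ k * Real.log T * u ^ (ℓ - k)) * (m:ℝ) ^ (-(ℓ - k)) := by
    intro m hm
    obtain ⟨hm1, hm2⟩ := Finset.mem_Icc.mp hm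
    have hm1' : (1:ℝ) ≤ (m:ℝ) := by exact_mod_cast hm1
    have hmsu : (m:ℝ) ≤ Real.sqrt u := (Nat.cast_le.mpr hm2).trans hM0le
    have hmu : (m:ℝ) ≤ u := hmsu.trans hsuu
    have h1um : 1 ≤ u / (m:ℝ) := (one_le_div (by linarith)).mpr hmu
    have humu : u / (m:ℝ) ≤ u := div_le_self hu0.le hm1'
    have hd := D (u / (m:ℝ)) h1um (humu.trans huT) ((humu.trans huT).trans hTpow)
    have hdiv : (u / (m:ℝ)) ^ (ℓ - k) = u ^ (ℓ - k) * (m:ℝ) ^ (-(ℓ - k)) := by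
      rw [Real.div_rpow hu0.le (by linarith : (0:ℝ) ≤ (m:ℝ)),
        Real.rpow_neg (by linarith : (0:ℝ) ≤ (m:ℝ)), div_eq_mul_inv]
    rw [hdiv] at hd
    refine hd.trans ?_
    have hma : (0:ℝ) ≤ (m:ℝ) ^ (-(ℓ - k)) := Real.rpow_nonneg (by linarith) _
    have hua : (0:ℝ) ≤ u ^ (ℓ - k) := Real.rpow_nonneg hu0.le _
    have hcoef : (0:ℝ) ≤ A * T ^ k * (u ^ (ℓ - k) * (m:ℝ) ^ (-(ℓ - k))) := by
      exact mul_nonneg (mul_nonneg hA.le hP0) (mul_nonneg hua hma)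
    nlinarith [mul_le_mul_of_nonneg_left hJ3 hcoef]
  have hsum := Finset.sum_le_sum hinner
  rw [Finset.sum_add_distrib, Finset.sum_const, ← Finset.mul_sum, Nat.card_Icc] at hsum
  simp only [Nat.add_sub_cancel, nsmul_eq_mul, mul_one] at hsum
  have hSsum : ∑ m ∈ Finset.Icc 1 ⌊Real.sqrt u⌋₊, (m:ℝ) ^ (-(ℓ - k)) ≤
      (1 + 1 / (1 - (ℓ - k))) * ((⌊Real.sqrt u⌋₊ : ℝ) ^ (1 - (ℓ - k))) := by
    have h := sum_rpow_neg_le (a := ℓ - k) (by linarith) hlk ⌊Real.sqrt u⌋₊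
    have hX1 : (1:ℝ) ≤ (⌊Real.sqrt u⌋₊ : ℝ) ^ (1 - (ℓ - k)) :=
      one_le_rpow' hfloor1 (by linarith)
    have hfact : (1 - (ℓ - k)) * (1 + 1 / (1 - (ℓ - k))) = (1 - (ℓ - k)) + 1 := by
      field_simp
    nlinarith [h, hX1, hfact, h1a]
  have hXle : ((⌊Real.sqrt u⌋₊ : ℝ)) ^ (1 - (ℓ - k)) ≤ u ^ ((1 - (ℓ - k)) / 2) := by
    calc ((⌊Real.sqrt u⌋₊ : ℝ)) ^ (1 - (ℓ - k)) ≤ Real.sqrt u ^ (1 - (ℓ - k)) :=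
          Real.rpow_le_rpow (Nat.cast_nonneg _) hM0le (by linarith)
      _ = u ^ ((1 - (ℓ - k)) / 2) := by
        rw [Real.sqrt_eq_rpow, ← Real.rpow_mul hu0.le,
          show 1 / (2:ℝ) * (1 - (ℓ - k)) = (1 - (ℓ - k)) / 2 by ring]
  have hprod : u ^ (ℓ - k) * u ^ ((1 - (ℓ - k)) / 2) = u ^ ((ℓ - k + 1) / 2) := by
    rw [← Real.rpow_add hu0]; congr 1; ring
  have hM0D : ((⌊Real.sqrt u⌋₊ : ℝ)) ≤ u ^ ((ℓ - k + 1) / 2) := by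
    calc ((⌊Real.sqrt u⌋₊ : ℝ)) ≤ Real.sqrt u := hM0le
      _ = u ^ (1 / (2:ℝ)) := Real.sqrt_eq_rpow u
      _ ≤ u ^ ((ℓ - k + 1) / 2) := Real.rpow_le_rpow_of_exponent_le hu1 (by linarith)
  have hDv1 : (1:ℝ) ≤ u ^ ((ℓ - k + 1) / 2) := one_le_rpow' hu1 (by linarith)
  have hc0 : (0:ℝ) ≤ 3 * A * T ^ k * Real.log T * u ^ (ℓ - k) := by
    have hua : (0:ℝ) ≤ u ^ (ℓ - k) := Real.rpow_nonneg hu0.le _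
    have hL0 : (0:ℝ) ≤ Real.log T := by linarith
    positivity
  have hmid : 3 * A * T ^ k * Real.log T * u ^ (ℓ - k) *
      ((1 + 1 / (1 - (ℓ - k))) * u ^ ((1 - (ℓ - k)) / 2)) =
      3 * A * (1 + 1 / (1 - (ℓ - k))) * T ^ k * Real.log T * u ^ ((ℓ - k + 1) / 2) := by
    rw [← hprod]; ring
  have hchain : ∑ m ∈ Finset.Icc 1 ⌊Real.sqrt u⌋₊,
      ‖∑ n ∈ Finset.Icc 1 ⌊u / (m : ℝ)⌋₊, (n : ℂ) ^ ((t : ℂ) * I)‖ ≤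
      (⌊Real.sqrt u⌋₊ : ℝ) +
        3 * A * (1 + 1 / (1 - (ℓ - k))) * T ^ k * Real.log T * u ^ ((ℓ - k + 1) / 2) := by
    refine hsum.trans ?_
    have h2 : 3 * A * T ^ k * Real.log T * u ^ (ℓ - k) *
        (∑ m ∈ Finset.Icc 1 ⌊Real.sqrt u⌋₊, (m:ℝ) ^ (-(ℓ - k))) ≤
        3 * A * T ^ k * Real.log T * u ^ (ℓ - k) *
        ((1 + 1 / (1 - (ℓ - k))) * u ^ ((1 - (ℓ - k)) / 2)) := by
      refine mul_le_mul_of_nonneg_left (hSsum.trans ?_) hc0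
      exact mul_le_mul_of_nonneg_left hXle hc'.le
    rw [hmid] at h2
    linarith
  refine (habs1.trans hchain).trans ?_
  have hPL : (1:ℝ)/2 ≤ T ^ k * Real.log T := by
    calc (1:ℝ)/2 = 1 * (1/2) := by ring
      _ ≤ T ^ k * Real.log T := mul_le_mul hP1 hL (by norm_num) hP0
  nlinarith [hM0D, hDv1, hPL, hA, hc', hP1, hL,
    mul_le_mul_of_nonneg_left hPL (by linarith : (0:ℝ) ≤ u ^ ((ℓ - k + 1) / 2)),
    mul_nonneg (mul_nonneg (mul_nonneg hA.le hP0) (by linarith : (0:ℝ) ≤ Real.log T))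
      (by linarith : (0:ℝ) ≤ u ^ ((ℓ - k + 1) / 2))]
end

section
/- Let k, ℓ be real numbers with 0 ≤ k ≤ 1/2 ≤ ℓ ≤ 1 and k + ℓ < 1, and suppose there is a constant A > 0 such that for all T ≥ 2, all t ∈ [T, 2T], and all real N, N' with 1 ≤ N < N' ≤ 2N ≤ 2T, one has |∑_{N < n ≤ N'} n^{it}| ≤ A · T^k · N^{ℓ−k}. Then there exists a constant C > 0 such that for all T ≥ 2, all real σ with max(ℓ − k, (5k + ℓ)/(4k + 1)) ≤ σ ≤ 1, and all t ∈ [T, 2T], one has |∑_{Y < n ≤ T} n^{−σ−it}| ≤ C · log T, where Y = T^{1/(6−4σ)}. -/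
open Complex

set_option maxHeartbeats 1000000

private lemma abel_identity (a : ℕ) (f : ℕ → ℝ) (g : ℕ → ℂ) :
    ∀ b, a ≤ b →
    ∑ n ∈ Finset.Ioc a b, (f n : ℂ) * g n
      = ∑ m ∈ Finset.Ioc a b, ((f m - f (m+1) : ℝ) : ℂ) * (∑ n ∈ Finset.Ioc a m, g n)
        + (f (b+1) : ℂ) * ∑ n ∈ Finset.Ioc a b, g n := by
  intro b hb
  induction b, hb using Nat.le_induction with
  | base => simp
  | succ b hb ih =>
    rw [Finset.sum_Ioc_succ_top hb, Finset.sum_Ioc_succ_top hb,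
        Finset.sum_Ioc_succ_top hb, ih]
    push_cast
    ring

private lemma telescope (a : ℕ) (f : ℕ → ℝ) :
    ∀ b, a ≤ b → ∑ m ∈ Finset.Ioc a b, (f m - f (m+1)) = f (a+1) - f (b+1) := by
  intro b hb
  induction b, hb using Nat.le_induction with
  | base => simp
  | succ b hb ih => rw [Finset.sum_Ioc_succ_top hb, ih]; ring

private lemma abel_bound (a b : ℕ) (f : ℕ → ℝ) (g : ℕ → ℂ) (B : ℝ) (hB : 0 ≤ B)
    (hf0 : ∀ n, 0 ≤ f n) (hfd : ∀ n, a < n → f (n+1) ≤ f n)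
    (hG : ∀ m, a < m → m ≤ b → ‖∑ n ∈ Finset.Ioc a m, g n‖ ≤ B) :
    ‖∑ n ∈ Finset.Ioc a b, (f n : ℂ) * g n‖ ≤ B * f (a+1) := by
  rcases le_or_gt b a with h | h
  · rw [Finset.Ioc_eq_empty (by omega)]
    simpa using mul_nonneg hB (hf0 (a+1))
  · rw [abel_identity a f g b h.le]
    have h1 : ‖∑ m ∈ Finset.Ioc a b,
        ((f m - f (m+1) : ℝ) : ℂ) * (∑ n ∈ Finset.Ioc a m, g n)‖
        ≤ ∑ m ∈ Finset.Ioc a b, (f m - f (m+1)) * B := by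
      refine (norm_sum_le _ _).trans (Finset.sum_le_sum fun m hm => ?_)
      have hma : a < m := (Finset.mem_Ioc.mp hm).1
      have hmb : m ≤ b := (Finset.mem_Ioc.mp hm).2
      have hfm : 0 ≤ f m - f (m+1) := sub_nonneg.mpr (hfd m hma)
      rw [norm_mul, Complex.norm_real, Real.norm_of_nonneg hfm]
      exact mul_le_mul_of_nonneg_left (hG m hma hmb) hfm
    have h2 : ‖(f (b+1) : ℂ) * ∑ n ∈ Finset.Ioc a b, g n‖
        ≤ f (b+1) * B := by
      rw [norm_mul, Complex.norm_real, Real.norm_of_nonneg (hf0 _)]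
      exact mul_le_mul_of_nonneg_left (hG b h le_rfl) (hf0 _)
    calc ‖_‖ ≤ _ := (norm_add_le _ _).trans (add_le_add h1 h2)
      _ = B * f (a+1) := by
          rw [← Finset.sum_mul, telescope a f b h.le]; ring

private lemma dyadic_sum (F : ℕ → ℂ) (y t0 : ℕ) (hy : y ≤ t0) :
    ∀ J : ℕ, ∑ n ∈ Finset.Ioc y (min t0 (y * 2 ^ J)), F n
      = ∑ j ∈ Finset.range J,
          ∑ n ∈ Finset.Ioc (min t0 (y * 2 ^ j)) (min t0 (y * 2 ^ (j+1))), F n := by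
  intro J
  induction J with
  | zero => simp [Nat.min_eq_right, hy]  -- min t0 (y*1) = y
  | succ J ih =>
    rw [Finset.sum_range_succ, ← ih,
        Finset.sum_Ioc_consecutive F
          (by exact le_min hy (Nat.le_mul_of_pos_right y (by positivity)))
          (by exact min_le_min le_rfl (by
            have : y * 2 ^ J ≤ y * 2 ^ (J+1) := by
              exact Nat.mul_le_mul_left y (Nat.pow_le_pow_right (by norm_num) (by omega))
            exact this))]


private lemma block_bound (k ℓ σ T t A : ℝ) (hT : 2 ≤ T)
    (ht : t ∈ Set.Icc T (2 * T)) (hσ0 : 0 ≤ σ)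
    (hexp : ∀ T : ℝ, 2 ≤ T → ∀ t ∈ Set.Icc T (2 * T), ∀ N N' : ℝ,
      1 ≤ N → N < N' → N' ≤ 2 * N → 2 * N ≤ 2 * T →
      ‖∑ n ∈ Finset.Ioc ⌊N⌋₊ ⌊N'⌋₊, (n : ℂ) ^ ((t : ℂ) * I)‖ ≤
        A * T ^ k * N ^ (ℓ - k))
    (hA : 0 < A) (a b : ℕ) (ha1 : 1 ≤ a) (hab : b ≤ 2 * a) (hbT : (b : ℝ) ≤ T) :
    ‖∑ n ∈ Finset.Ioc a b, (n : ℂ) ^ (-(σ : ℂ) - t * I)‖ ≤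
      A * T ^ k * (a : ℝ) ^ (ℓ - k) * (a : ℝ) ^ (-σ) := by
  have hT0 : (0 : ℝ) < T := by linarith
  have ha0 : (0 : ℝ) < (a : ℝ) := by exact_mod_cast ha1
  have hB : 0 ≤ A * T ^ k * (a : ℝ) ^ (ℓ - k) :=
    mul_nonneg (mul_nonneg hA.le (Real.rpow_nonneg hT0.le k)) (Real.rpow_nonneg ha0.le _)
  have hsplit : ∑ n ∈ Finset.Ioc a b, (n : ℂ) ^ (-(σ : ℂ) - t * I)
      = ∑ n ∈ Finset.Ioc a b,
          ((((n : ℝ) ^ (-σ) : ℝ) : ℂ) * (n : ℂ) ^ (-(t : ℂ) * I)) := by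
    refine Finset.sum_congr rfl fun n hn => ?_
    have hn1 : 1 ≤ n := le_trans ha1 (Finset.mem_Ioc.mp hn).1.le
    have hn0 : ((n : ℂ)) ≠ 0 := Nat.cast_ne_zero.mpr (by omega)
    rw [Complex.ofReal_cpow (n.cast_nonneg) (-σ), Complex.ofReal_neg,
        Complex.ofReal_natCast, ← Complex.cpow_add _ _ hn0]
    congr 1
    ring
  rw [hsplit]
  have hfd : ∀ n : ℕ, a < n → ((n+1 : ℕ) : ℝ) ^ (-σ) ≤ ((n : ℕ) : ℝ) ^ (-σ) := by
    intro n hn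
    refine Real.rpow_le_rpow_of_nonpos ?_ ?_ (by linarith)
    · have : 1 ≤ n := by omega
      exact_mod_cast this
    · exact_mod_cast Nat.le_succ n
  have hG : ∀ m : ℕ, a < m → m ≤ b →
      ‖∑ n ∈ Finset.Ioc a m, (n : ℂ) ^ (-(t : ℂ) * I)‖ ≤
        A * T ^ k * (a : ℝ) ^ (ℓ - k) := by
    intro m hm hmb
    have hconj : ∑ n ∈ Finset.Ioc a m, (n : ℂ) ^ (-(t : ℂ) * I)
        = (starRingEnd ℂ) (∑ n ∈ Finset.Ioc a m, (n : ℂ) ^ ((t : ℂ) * I)) := by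
      rw [map_sum]
      refine Finset.sum_congr rfl fun n hn => ?_
      have harg : ((n : ℂ)).arg ≠ Real.pi := by
        rw [Complex.natCast_arg]; exact Real.pi_ne_zero.symm
      calc (n : ℂ) ^ (-(t : ℂ) * I)
          = (starRingEnd ℂ) (n : ℂ) ^ (-(t : ℂ) * I) := by rw [Complex.conj_natCast]
        _ = (starRingEnd ℂ) ((n : ℂ) ^ (starRingEnd ℂ) (-(t : ℂ) * I)) :=
            Complex.conj_cpow _ _ harg
        _ = (starRingEnd ℂ) ((n : ℂ) ^ ((t : ℂ) * I)) := by
            congr 1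
            rw [map_mul, map_neg, Complex.conj_ofReal, Complex.conj_I]
            ring
    rw [hconj, Complex.norm_conj]
    have hmb' : (m : ℝ) ≤ 2 * (a : ℝ) := by exact_mod_cast le_trans hmb hab
    have haT : (a : ℝ) ≤ T := by
      have : (a : ℝ) ≤ (b : ℝ) := by exact_mod_cast (by omega : a ≤ b)
      linarith
    have happ := hexp T hT t ht (a : ℝ) (m : ℝ) (by exact_mod_cast ha1)
      (by exact_mod_cast hm) hmb' (by linarith)
    simpa using happ
  have key := abel_bound a b (fun n => ((n : ℕ) : ℝ) ^ (-σ))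
    (fun n => (n : ℂ) ^ (-(t : ℂ) * I)) (A * T ^ k * (a : ℝ) ^ (ℓ - k)) hB
    (fun n => Real.rpow_nonneg (by positivity) _) hfd hG
  refine key.trans ?_
  refine mul_le_mul_of_nonneg_left ?_ hB
  refine Real.rpow_le_rpow_of_nonpos ha0 ?_ (by linarith)
  exact_mod_cast Nat.le_succ a


/-- Bound for the tail of the Dirichlet polynomial via an exponent pair (k, ℓ) with
k + ℓ < 1: for max(ℓ−k, (5k+ℓ)/(4k+1)) ≤ σ ≤ 1, T ≤ t ≤ 2T and Y = T^{1/(6−4σ)},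
one has |∑_{Y < n ≤ T} n^{−σ−it}| ≤ C log T. -/
theorem tail_dirichlet_polynomial_bound
    (k ℓ : ℝ) (hk0 : 0 ≤ k) (hk : k ≤ 1 / 2) (hl : 1 / 2 ≤ ℓ) (hl1 : ℓ ≤ 1)
    (hkl : k + ℓ < 1) (A : ℝ) (hA : 0 < A)
    (hexp : ∀ T : ℝ, 2 ≤ T → ∀ t ∈ Set.Icc T (2 * T), ∀ N N' : ℝ,
      1 ≤ N → N < N' → N' ≤ 2 * N → 2 * N ≤ 2 * T →
      ‖∑ n ∈ Finset.Ioc ⌊N⌋₊ ⌊N'⌋₊, (n : ℂ) ^ ((t : ℂ) * I)‖ ≤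
        A * T ^ k * N ^ (ℓ - k)) :
    ∃ C : ℝ, 0 < C ∧ ∀ T : ℝ, 2 ≤ T →
      ∀ σ : ℝ, max (ℓ - k) ((5 * k + ℓ) / (4 * k + 1)) ≤ σ → σ ≤ 1 →
      ∀ t ∈ Set.Icc T (2 * T),
      ‖∑ n ∈ Finset.Ioc ⌊T ^ (1 / (6 - 4 * σ))⌋₊ ⌊T⌋₊,
          (n : ℂ) ^ (-(σ : ℂ) - t * I)‖ ≤ C * Real.log T := by
  have hlog2 : 0 < Real.log 2 := Real.log_pos (by norm_num)
  refine ⟨4 * A / Real.log 2, by positivity, ?_⟩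
  intro T hT σ hσ1 hσ2 t ht
  have hσa : ℓ - k ≤ σ := le_trans (le_max_left _ _) hσ1
  have hσb : (5 * k + ℓ) / (4 * k + 1) ≤ σ := le_trans (le_max_right _ _) hσ1
  have h4k : (0 : ℝ) < 4 * k + 1 := by linarith
  have hσ0 : 0 ≤ σ := le_trans (by positivity) hσb
  have hT0 : (0 : ℝ) < T := by linarith
  have hT1 : (1 : ℝ) ≤ T := by linarith
  have h64 : (0 : ℝ) < 6 - 4 * σ := by linarith
  set Y : ℝ := T ^ (1 / (6 - 4 * σ)) with hYdef
  have hY1 : 1 ≤ Y := Real.one_le_rpow hT1 (by positivity)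
  have hYT : Y ≤ T := by
    calc Y ≤ T ^ (1 : ℝ) := Real.rpow_le_rpow_of_exponent_le hT1 (by
          rw [div_le_one h64]; linarith)
      _ = T := Real.rpow_one T
  set y : ℕ := ⌊Y⌋₊ with hydef
  set t0 : ℕ := ⌊T⌋₊ with ht0def
  have hy1 : 1 ≤ y := Nat.le_floor (by exact_mod_cast hY1)
  have ht02 : 2 ≤ t0 := Nat.le_floor (by exact_mod_cast hT)
  have hyt0 : y ≤ t0 := Nat.floor_mono hYT
  have ht0T : (t0 : ℝ) ≤ T := Nat.floor_le hT0.le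
  set J : ℕ := Nat.log 2 t0 + 1 with hJdef
  have hJ : min t0 (y * 2 ^ J) = t0 := by
    refine min_eq_left ?_
    have h1 : t0 < 2 ^ J := Nat.lt_pow_succ_log_self (by norm_num) t0
    calc t0 ≤ 2 ^ J := h1.le
      _ ≤ y * 2 ^ J := Nat.le_mul_of_pos_left _ (by omega)
  -- decompose dyadically
  have hdec := dyadic_sum (fun n => (n : ℂ) ^ (-(σ : ℂ) - t * I)) y t0 hyt0 J
  rw [hJ] at hdec
  rw [hdec]
  -- bound each block by 2 * A
  have hblock : ∀ j : ℕ,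
      ‖∑ n ∈ Finset.Ioc (min t0 (y * 2 ^ j)) (min t0 (y * 2 ^ (j+1))),
        (n : ℂ) ^ (-(σ : ℂ) - t * I)‖ ≤ 2 * A := by
    intro j
    set a : ℕ := min t0 (y * 2 ^ j) with hadef
    set b : ℕ := min t0 (y * 2 ^ (j+1)) with hbdef
    rcases le_or_gt b a with hba | hab
    · rw [Finset.Ioc_eq_empty (by omega)]
      simpa using by positivity
    · -- nonempty block: a = y * 2^j < t0
      have hyj : y * 2 ^ j < t0 := by
        by_contra hcon
        push_neg at hcon
        have : a = t0 := by
          rw [hadef]; omega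
        have hbb : b ≤ t0 := min_le_left _ _
        omega
      have ha : a = y * 2 ^ j := by rw [hadef]; omega
      have ha1 : 1 ≤ a := by
        rw [ha]; have : 0 < 2 ^ j := Nat.pow_pos (n := j) (by norm_num)
        exact Nat.one_le_iff_ne_zero.mpr (by positivity)
      have hab2 : b ≤ 2 * a := by
        rw [ha, hbdef]
        have : y * 2 ^ (j+1) = 2 * (y * 2 ^ j) := by ring
        omega
      have hbT : (b : ℝ) ≤ T := by
        have : b ≤ t0 := min_le_left _ _
        calc (b : ℝ) ≤ (t0 : ℝ) := by exact_mod_cast this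
          _ ≤ T := ht0T
      have hbd := block_bound k ℓ σ T t A hT ht hσ0 hexp hA a b ha1 hab2 hbT
      refine hbd.trans ?_
      -- A * T^k * a^(ℓ-k) * a^(-σ) ≤ 2 * A
      have ha0 : (0 : ℝ) < (a : ℝ) := by exact_mod_cast ha1
      have hstep1 : (a : ℝ) ^ (ℓ - k) * (a : ℝ) ^ (-σ) = (a : ℝ) ^ (ℓ - k - σ) := by
        rw [← Real.rpow_add ha0]; ring_nf
      have hYa : Y / 2 ≤ (a : ℝ) := by
        have hya : (y : ℝ) ≤ (a : ℝ) := by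
          rw [ha]
          have : y ≤ y * 2 ^ j := Nat.le_mul_of_pos_right _ (Nat.pow_pos (n := j) (by norm_num))
          exact_mod_cast this
        rcases le_or_gt 2 Y with h2 | h2
        · have := Nat.sub_one_lt_floor Y
          have hy' : Y - 1 < (y : ℝ) := by exact_mod_cast this
          nlinarith
        · have : (1 : ℝ) ≤ (y : ℝ) := by exact_mod_cast hy1
          nlinarith
      have he0 : ℓ - k - σ ≤ 0 := by linarith
      have hstep2 : (a : ℝ) ^ (ℓ - k - σ) ≤ (Y / 2) ^ (ℓ - k - σ) :=
        Real.rpow_le_rpow_of_nonpos (by linarith) hYa he0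
      have hstep3 : (Y / 2) ^ (ℓ - k - σ) ≤ 2 * Y ^ (ℓ - k - σ) := by
        rw [Real.div_rpow (by linarith) (by norm_num)]
        rw [div_le_iff₀ (by positivity : (0:ℝ) < (2:ℝ) ^ (ℓ - k - σ))]
        have h2e : (2 : ℝ) ^ (σ + k - ℓ) ≤ 2 ^ (1 : ℝ) :=
          Real.rpow_le_rpow_of_exponent_le (by norm_num) (by linarith)
        rw [Real.rpow_one] at h2e
        have hmul : (2 : ℝ) ^ (ℓ - k - σ) * (2 : ℝ) ^ (σ + k - ℓ) = 1 := by
          rw [← Real.rpow_add (by norm_num), show ℓ - k - σ + (σ + k - ℓ) = 0 by ring,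
            Real.rpow_zero]
        have hYe : (0 : ℝ) < Y ^ (ℓ - k - σ) := Real.rpow_pos_of_pos (by linarith) _
        have hu : (0 : ℝ) < (2 : ℝ) ^ (ℓ - k - σ) :=
          Real.rpow_pos_of_pos (by norm_num) _
        have h2u : (1 : ℝ) ≤ 2 * (2 : ℝ) ^ (ℓ - k - σ) := by nlinarith
        nlinarith [mul_le_mul_of_nonneg_left h2u hYe.le]
      have hstep4 : T ^ k * Y ^ (ℓ - k - σ) ≤ 1 := by
        have hYe : Y ^ (ℓ - k - σ) = T ^ (1 / (6 - 4 * σ) * (ℓ - k - σ)) := by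
          rw [hYdef, ← Real.rpow_mul hT0.le]
        have h5 : 5 * k + ℓ ≤ σ * (4 * k + 1) := by
          rw [div_le_iff₀ h4k] at hσb; linarith
        have hexpneg : k + 1 / (6 - 4 * σ) * (ℓ - k - σ) ≤ 0 := by
          have h6 : 1 / (6 - 4 * σ) * (ℓ - k - σ) ≤ -k := by
            rw [div_mul_eq_mul_div, div_le_iff₀ h64]; nlinarith
          linarith
        calc T ^ k * Y ^ (ℓ - k - σ) = T ^ (k + 1 / (6 - 4 * σ) * (ℓ - k - σ)) := by
              rw [hYe, ← Real.rpow_add hT0]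
          _ ≤ 1 := Real.rpow_le_one_of_one_le_of_nonpos hT1 hexpneg
      have hTk : 0 ≤ T ^ k := Real.rpow_nonneg hT0.le k
      calc A * T ^ k * (a : ℝ) ^ (ℓ - k) * (a : ℝ) ^ (-σ)
          = A * (T ^ k * (a : ℝ) ^ (ℓ - k - σ)) := by
            rw [mul_assoc, hstep1, mul_assoc]
        _ ≤ A * (T ^ k * (Y / 2) ^ (ℓ - k - σ)) :=
            mul_le_mul_of_nonneg_left (mul_le_mul_of_nonneg_left hstep2 hTk) hA.le
        _ ≤ A * (T ^ k * (2 * Y ^ (ℓ - k - σ))) :=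
            mul_le_mul_of_nonneg_left (mul_le_mul_of_nonneg_left hstep3 hTk) hA.le
        _ = 2 * A * (T ^ k * Y ^ (ℓ - k - σ)) := by ring
        _ ≤ 2 * A * 1 := mul_le_mul_of_nonneg_left hstep4 (by positivity)
        _ = 2 * A := mul_one _
  refine le_trans (norm_sum_le _ _) ?_
  refine le_trans (Finset.sum_le_sum fun j _ => hblock j) ?_
  rw [Finset.sum_const, Finset.card_range, nsmul_eq_mul]
  -- (J : ℝ) * (2 * A) ≤ 4 * A / log 2 * log T
  have hlogT : Real.log 2 ≤ Real.log T := Real.log_le_log (by norm_num) hT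
  have hL : (Nat.log 2 t0 : ℝ) * Real.log 2 ≤ Real.log T := by
    have h1 : (2 : ℕ) ^ Nat.log 2 t0 ≤ t0 := Nat.pow_log_le_self 2 (by omega)
    have h2 : ((2 : ℝ)) ^ (Nat.log 2 t0) ≤ T := by
      calc ((2 : ℝ)) ^ (Nat.log 2 t0) = (((2 : ℕ) ^ Nat.log 2 t0 : ℕ) : ℝ) := by push_cast; ring
        _ ≤ (t0 : ℝ) := by exact_mod_cast h1
        _ ≤ T := ht0T
    calc (Nat.log 2 t0 : ℝ) * Real.log 2 = Real.log ((2 : ℝ) ^ (Nat.log 2 t0)) := by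
          rw [Real.log_pow]
      _ ≤ Real.log T := Real.log_le_log (by positivity) h2
  have hJlog : (J : ℝ) * Real.log 2 ≤ 2 * Real.log T := by
    have : (J : ℝ) = (Nat.log 2 t0 : ℝ) + 1 := by rw [hJdef]; push_cast; ring
    rw [this]
    nlinarith
  rw [div_mul_eq_mul_div, le_div_iff₀ hlog2] at *
  nlinarith [mul_le_mul_of_nonneg_left hJlog (by positivity : (0:ℝ) ≤ 2 * A)]
end
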